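/- arXiv:1912.11946 — 7 statements merged into one kernel-verified Lean document; each statement's English description precedes it below -/
import Mathlib

section
/- For every t = 1,…,T, the cost-to-go function 𝒬_{t+1} is a convex function and 𝒳_t ⊆ int(dom 𝒬_{t+1}). -/
open Matrix Set

noncomputable section

/-- Convexity of an extended-real-valued function, via convexity of its epigraph. -/
def ERealConvex {E : Type*} [AddCommGroup E] [Module ℝ E] (φ : E → EReal) : Prop :=
  Convex ℝ {pz : E × ℝ | φ pz.1 ≤ (pz.2 : EReal)}

/-- A proper extended-real-valued function: never −∞ and not identically +∞. -/
def ERealProper {E : Type*} (φ : E → EReal) : Prop :=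
  (∀ x, φ x ≠ ⊥) ∧ (∃ x, φ x ≠ ⊤)

/-!
Backward induction on `t`. For convexity, `𝒬_t(y)` is the infimum over `x` of the jointly convex
`f_t(x, y) + 𝒬_{t+1}(x)` on the convex graph `{(x, y) | x ∈ X_t(y)}`, and partial minimization of
a jointly convex function preserves convexity. For finiteness, the tube lemma on the compact `𝒳_t`
makes `f_t(·, y')` finite on `𝒳_t` for all `y'` near `𝒳_{t-1}`; by (H1) such `y'` have a feasible
`x ∈ 𝒳_t`, where `𝒬_{t+1}(x) < ⊤` by induction, so `𝒬_t(y') ≤ f_t(x, y') + 𝒬_{t+1}(x) < ⊤`.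
-/

section ERealConvex

variable {E F : Type*} [AddCommGroup E] [Module ℝ E] [AddCommGroup F] [Module ℝ F]

theorem erealConvex_iff {φ : E → EReal} :
    ERealConvex φ ↔ ∀ (x₁ x₂ : E) (c₁ c₂ a b : ℝ), φ x₁ ≤ c₁ → φ x₂ ≤ c₂ →
      0 ≤ a → 0 ≤ b → a + b = 1 → φ (a • x₁ + b • x₂) ≤ ↑(a * c₁ + b * c₂) :=
  ⟨fun h x₁ x₂ c₁ c₂ _ _ h₁ h₂ ha hb hab => h (x := (x₁, c₁)) (y := (x₂, c₂)) h₁ h₂ ha hb hab,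
    fun h _ h₁ _ h₂ _ _ ha hb hab => h _ _ _ _ _ _ h₁ h₂ ha hb hab⟩

theorem ERealConvex.le_combo {φ : E → EReal} (h : ERealConvex φ) {x₁ x₂ : E} {c₁ c₂ a b : ℝ}
    (h₁ : φ x₁ ≤ c₁) (h₂ : φ x₂ ≤ c₂) (ha : 0 ≤ a) (hb : 0 ≤ b) (hab : a + b = 1) :
    φ (a • x₁ + b • x₂) ≤ ↑(a * c₁ + b * c₂) :=
  erealConvex_iff.1 h x₁ x₂ c₁ c₂ a b h₁ h₂ ha hb hab

theorem ERealConvex.const (c : ℝ) : ERealConvex fun _ : E => (c : EReal) :=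
  erealConvex_iff.2 fun _ _ c₁ c₂ a b h₁ h₂ ha hb hab => by
    rw [EReal.coe_le_coe_iff] at h₁ h₂ ⊢
    linarith [mul_le_mul_of_nonneg_left h₁ ha, mul_le_mul_of_nonneg_left h₂ hb,
      show a * c + b * c = c by rw [← add_mul, hab, one_mul]]

theorem ERealConvex.convex_le {φ : E → EReal} (h : ERealConvex φ) (c : ℝ) :
    Convex ℝ {x | φ x ≤ c} := fun _ h₁ _ h₂ a b ha hb hab => by
  simpa only [mem_ofPred_eq, ← add_mul, hab, one_mul] using h.le_combo h₁ h₂ ha hb hab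

theorem ERealConvex.comp_fst {φ : E → EReal} (h : ERealConvex φ) :
    ERealConvex fun z : E × F => φ z.1 :=
  erealConvex_iff.2 fun _ _ _ _ _ _ h₁ h₂ ha hb hab => h.le_combo h₁ h₂ ha hb hab

theorem ERealConvex.eq_bot_of_eq_bot {φ : E → EReal} (h : ERealConvex φ) {x₁ x₂ : E} {a b : ℝ}
    (h₁ : φ x₁ = ⊥) (h₂ : φ x₂ ≠ ⊤) (ha : 0 < a) (hb : 0 ≤ b) (hab : a + b = 1) :
    φ (a • x₁ + b • x₂) = ⊥ := by
  refine (EReal.eq_bot_iff_forall_lt _).2 fun y => ?_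
  set c₂ := (φ x₂).toReal
  -- `(x₁, M)` lies in the epigraph for every real `M`; this one pushes the bound down to `y - 1`.
  set M := (y - 1 - b * c₂) / a
  calc φ (a • x₁ + b • x₂) ≤ ↑(a * M + b * c₂) :=
        h.le_combo (h₁ ▸ bot_le) (EReal.le_coe_toReal h₂) ha.le hb hab
    _ < y := by
        rw [EReal.coe_lt_coe_iff, mul_div_cancel₀ _ ha.ne']
        linarith

theorem EReal.exists_add_eq_of_add_le {u v : EReal} {c : ℝ} (hu : u ≠ ⊥) (hv : v ≠ ⊥)
    (h : u + v ≤ c) : ∃ α β : ℝ, u ≤ α ∧ v ≤ β ∧ α + β = c := by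
  induction u using EReal.rec with
  | bot => exact absurd rfl hu
  | top => simp [EReal.top_add_of_ne_bot hv] at h
  | coe α =>
    induction v using EReal.rec with
    | bot => exact absurd rfl hv
    | top => simp at h
    | coe β =>
      refine ⟨α, c - α, le_rfl, ?_, by ring⟩
      rw [← EReal.coe_add, EReal.coe_le_coe_iff] at h
      exact EReal.coe_le_coe_iff.2 (by linarith)

theorem ERealConvex.add {φ ψ : E → EReal} (hφ : ERealConvex φ) (hψ : ERealConvex ψ)
    (hφ_bot : ∀ x, φ x ≠ ⊥) : ERealConvex fun x => φ x + ψ x := by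
  refine erealConvex_iff.2 fun x₁ x₂ c₁ c₂ a b h₁ h₂ ha hb hab => ?_
  rcases ha.eq_or_lt with rfl | ha
  · obtain rfl : b = 1 := by linarith
    simpa using h₂
  rcases hb.eq_or_lt with rfl | hb
  · obtain rfl : a = 1 := by linarith
    simpa using h₁
  -- Since `⊤ + ⊥ = ⊥` in `EReal`, `φ` may be `⊤` where `ψ = ⊥`; there `ψ` is `⊥` on the whole
  -- open segment, which bounds the sum without any information on `φ`.
  have hψ_top : ∀ {x} {c : ℝ}, φ x + ψ x ≤ c → ψ x ≠ ⊤ := fun {x} _ hx htop => by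
    simp [htop, EReal.add_top_of_ne_bot (hφ_bot x)] at hx
  by_cases hψ₁ : ψ x₁ = ⊥
  · simp [hψ.eq_bot_of_eq_bot hψ₁ (hψ_top h₂) ha hb.le hab]
  by_cases hψ₂ : ψ x₂ = ⊥
  · rw [add_comm (a • x₁)]
    simp [hψ.eq_bot_of_eq_bot hψ₂ (hψ_top h₁) hb ha.le (by linarith)]
  obtain ⟨α₁, β₁, hα₁, hβ₁, rfl⟩ := EReal.exists_add_eq_of_add_le (hφ_bot x₁) hψ₁ h₁
  obtain ⟨α₂, β₂, hα₂, hβ₂, rfl⟩ := EReal.exists_add_eq_of_add_le (hφ_bot x₂) hψ₂ h₂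
  calc φ (a • x₁ + b • x₂) + ψ (a • x₁ + b • x₂)
      ≤ ↑(a * α₁ + b * α₂) + ↑(a * β₁ + b * β₂) :=
        add_le_add (hφ.le_combo hα₁ hα₂ ha.le hb.le hab) (hψ.le_combo hβ₁ hβ₂ ha.le hb.le hab)
    _ = ↑(a * (α₁ + β₁) + b * (α₂ + β₂)) := by rw [← EReal.coe_add]; ring_nf

theorem ERealConvex.sInf_image {φ : E × F → EReal} (hφ : ERealConvex φ) {C : F → Set E}
    (hC : Convex ℝ {z : E × F | z.1 ∈ C z.2}) :
    ERealConvex fun y => sInf ((fun x => φ (x, y)) '' C y) := by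
  refine erealConvex_iff.2 fun y₁ y₂ r₁ r₂ a b h₁ h₂ ha hb hab => ?_
  refine EReal.le_of_forall_lt_iff_le.1 fun z hz => ?_
  set ε := z - (a * r₁ + b * r₂)
  have near : ∀ {y : F} {r : ℝ}, sInf ((fun x => φ (x, y)) '' C y) ≤ r →
      ∃ x ∈ C y, φ (x, y) ≤ ↑(r + ε) := fun {y r} hy => by
    have hε : 0 < ε := sub_pos.2 (EReal.coe_lt_coe_iff.1 hz)
    obtain ⟨_, ⟨x, hx, rfl⟩, hlt⟩ :=
      sInf_lt_iff.1 (hy.trans_lt (EReal.coe_lt_coe_iff.2 (lt_add_of_pos_right r hε)))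
    exact ⟨x, hx, hlt.le⟩
  obtain ⟨x₁, hx₁, hφ₁⟩ := near h₁
  obtain ⟨x₂, hx₂, hφ₂⟩ := near h₂
  calc sInf ((fun x => φ (x, a • y₁ + b • y₂)) '' C (a • y₁ + b • y₂))
      ≤ φ (a • x₁ + b • x₂, a • y₁ + b • y₂) :=
        sInf_le ⟨_, hC (x := (x₁, y₁)) (y := (x₂, y₂)) hx₁ hx₂ ha hb hab, rfl⟩
    _ ≤ ↑(a * (r₁ + ε) + b * (r₂ + ε)) :=
        hφ.le_combo (x₁ := (x₁, y₁)) (x₂ := (x₂, y₂)) hφ₁ hφ₂ ha hb hab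
    _ = z := by
        congr 1
        linear_combination ε * hab

end ERealConvex

theorem convex_setOf_mulVec_add_mulVec_eq {m k l : Type*} [Fintype k] [Fintype l]
    (A : Matrix m k ℝ) (B : Matrix m l ℝ) (b : m → ℝ) :
    Convex ℝ {z : EuclideanSpace ℝ k × EuclideanSpace ℝ l | A *ᵥ z.1 + B *ᵥ z.2 = b} :=
  (convex_singleton b).linear_preimage
    (A.mulVecLin ∘ₗ (WithLp.linearEquiv 2 ℝ (k → ℝ)).toLinearMap ∘ₗ LinearMap.fst ℝ _ _ +
      B.mulVecLin ∘ₗ (WithLp.linearEquiv 2 ℝ (l → ℝ)).toLinearMap ∘ₗ LinearMap.snd ℝ _ _)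

theorem convex_setOf_feasible {ι k l m : Type*} [Fintype k] [Fintype l]
    {K : Set (EuclideanSpace ℝ k)} (hK : Convex ℝ K)
    {g : ι → EuclideanSpace ℝ k → EuclideanSpace ℝ l → EReal}
    (hg : ∀ i, ERealConvex fun z : EuclideanSpace ℝ k × EuclideanSpace ℝ l => g i z.1 z.2)
    (A : Matrix m k ℝ) (B : Matrix m l ℝ) (b : m → ℝ) :
    Convex ℝ {z : EuclideanSpace ℝ k × EuclideanSpace ℝ l |
      z.1 ∈ K ∧ (∀ i, g i z.1 z.2 ≤ 0) ∧ A *ᵥ z.1 + B *ᵥ z.2 = b} := by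
  have hsub : Convex ℝ {z : EuclideanSpace ℝ k × EuclideanSpace ℝ l | ∀ i, g i z.1 z.2 ≤ 0} := by
    simpa only [ofPred_forall, EReal.coe_zero] using convex_iInter fun i => (hg i).convex_le 0
  exact (hK.linear_preimage (LinearMap.fst ℝ _ _)).inter
    (hsub.inter (convex_setOf_mulVec_add_mulVec_eq A B b))

theorem mem_interior_setOf_sInf_add_ne_top {E F : Type*} [TopologicalSpace E]
    [TopologicalSpace F] {K : Set E} (hK : IsCompact K) {f : E → F → EReal} {ψ : E → EReal}
    {C : F → Set E} {y : F} (hf : ∀ x ∈ K, (x, y) ∈ interior {z : E × F | f z.1 z.2 ≠ ⊤})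
    (hψ : ∀ x ∈ K, ψ x ≠ ⊤) (hC : y ∈ interior {y' | (C y' ∩ K).Nonempty}) :
    y ∈ interior {y' | sInf ((fun x => f x y' + ψ x) '' C y') ≠ ⊤} := by
  have hf_near : ∀ᶠ y' in nhds y, ∀ x ∈ K, f x y' ≠ ⊤ :=
    hK.eventually_forall_of_forall_eventually fun x hx =>
      (continuous_swap.tendsto (y, x)).eventually (p := fun z : E × F => f z.1 z.2 ≠ ⊤)
        (mem_interior_iff_mem_nhds.1 (hf x hx))
  rw [mem_interior_iff_mem_nhds] at hC ⊢
  filter_upwards [hC, hf_near] with y' ⟨x, hxC, hxK⟩ hfy'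
  exact ne_top_of_le_ne_top (EReal.add_lt_top (hfy' x hxK) (hψ x hxK)).ne (sInf_le ⟨x, hxC, rfl⟩)

theorem stmt_0_general
    (n p q T : ℕ)
    (𝒳 : ℕ → Set (EuclideanSpace ℝ (Fin n)))
    (h𝒳 : ∀ t, 1 ≤ t → t ≤ T → (𝒳 t).Nonempty ∧ Convex ℝ (𝒳 t) ∧ IsCompact (𝒳 t))
    (f : ℕ → EuclideanSpace ℝ (Fin n) → EuclideanSpace ℝ (Fin n) → EReal)
    (hf : ∀ t, 1 ≤ t → t ≤ T →
      ERealProper (fun z : EuclideanSpace ℝ (Fin n) × EuclideanSpace ℝ (Fin n) => f t z.1 z.2) ∧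
      LowerSemicontinuous
        (fun z : EuclideanSpace ℝ (Fin n) × EuclideanSpace ℝ (Fin n) => f t z.1 z.2) ∧
      ERealConvex
        (fun z : EuclideanSpace ℝ (Fin n) × EuclideanSpace ℝ (Fin n) => f t z.1 z.2) ∧
      (𝒳 t ×ˢ 𝒳 (t - 1)) ⊆ interior {z : EuclideanSpace ℝ (Fin n) × EuclideanSpace ℝ (Fin n) |
        f t z.1 z.2 ≠ ⊤})
    (g : ℕ → Fin p → EuclideanSpace ℝ (Fin n) → EuclideanSpace ℝ (Fin n) → EReal)
    (hg : ∀ t, 1 ≤ t → t ≤ T → ∀ i,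
      ERealProper (fun z : EuclideanSpace ℝ (Fin n) × EuclideanSpace ℝ (Fin n) => g t i z.1 z.2) ∧
      LowerSemicontinuous
        (fun z : EuclideanSpace ℝ (Fin n) × EuclideanSpace ℝ (Fin n) => g t i z.1 z.2) ∧
      ERealConvex
        (fun z : EuclideanSpace ℝ (Fin n) × EuclideanSpace ℝ (Fin n) => g t i z.1 z.2) ∧
      (𝒳 t ×ˢ 𝒳 (t - 1)) ⊆ interior {z : EuclideanSpace ℝ (Fin n) × EuclideanSpace ℝ (Fin n) |
        g t i z.1 z.2 ≠ ⊤})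
    (A B : ℕ → Matrix (Fin q) (Fin n) ℝ) (b : ℕ → Fin q → ℝ)
    (X : ℕ → EuclideanSpace ℝ (Fin n) → Set (EuclideanSpace ℝ (Fin n)))
    (hX : ∀ t y, X t y =
      {x ∈ 𝒳 t | (∀ i, g t i x y ≤ 0) ∧ (A t).mulVec x + (B t).mulVec y = b t})
    -- Assumption (H1)
    (hH1b : ∀ t, 2 ≤ t → t ≤ T →
      𝒳 (t - 1) ⊆ interior {y | (X t y ∩ intrinsicInterior ℝ (𝒳 t)).Nonempty})
    -- the cost-to-go functions
    (Q : ℕ → EuclideanSpace ℝ (Fin n) → EReal)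
    (hQT : ∀ y, Q (T + 1) y = 0)
    (hQ : ∀ t, 1 ≤ t → t ≤ T → ∀ y,
      Q t y = sInf ((fun x => f t x y + Q (t + 1) x) '' X t y)) :
    ∀ t, 1 ≤ t → t ≤ T →
      ERealConvex (Q (t + 1)) ∧ 𝒳 t ⊆ interior {y | Q (t + 1) y ≠ ⊤} := by
  have hconv : ∀ t ≤ T, ERealConvex (Q (t + 1)) := by
    intro t ht
    induction ht using Nat.decreasingInduction with
    | self => simpa [← EReal.coe_zero, funext hQT] using ERealConvex.const (E := _) 0
    | of_succ t ht ih =>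
      obtain ⟨⟨hf_bot, -⟩, -, hf_conv, -⟩ := hf (t + 1) (by omega) ht
      have hgraph : Convex ℝ {z : EuclideanSpace ℝ (Fin n) × EuclideanSpace ℝ (Fin n) |
          z.1 ∈ X (t + 1) z.2} := by
        simp_rw [hX]
        exact convex_setOf_feasible (h𝒳 (t + 1) (by omega) ht).2.1
          (fun i => (hg (t + 1) (by omega) ht i).2.2.1) (A (t + 1)) (B (t + 1)) (b (t + 1))
      rw [funext (hQ (t + 1) (by omega) ht)]
      exact (hf_conv.add ih.comp_fst hf_bot).sInf_image hgraph
  have hdom : ∀ t ≤ T, 1 ≤ t → 𝒳 t ⊆ interior {y | Q (t + 1) y ≠ ⊤} := by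
    intro t ht
    induction ht using Nat.decreasingInduction with
    | self => simp [hQT]
    | of_succ t ht ih =>
      intro ht1 y hy
      have hf_dom : 𝒳 (t + 1) ×ˢ 𝒳 t ⊆ interior {z | f (t + 1) z.1 z.2 ≠ ⊤} :=
        (hf (t + 1) (by omega) ht).2.2.2
      rw [funext (hQ (t + 1) (by omega) ht)]
      exact mem_interior_setOf_sInf_add_ne_top (h𝒳 (t + 1) (by omega) ht).2.2
        (fun x hx => hf_dom (mk_mem_prod hx hy)) (fun x hx => interior_subset (ih (by omega) hx))
        (interior_mono (fun _ h => h.mono (inter_subset_inter_right _ intrinsicInterior_subset))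
          (hH1b (t + 1) (by omega) ht hy))
  exact fun t ht1 ht => ⟨hconv t ht, hdom t ht ht1⟩

/-- under (H1), each cost-to-go function `𝒬_{t+1}` is convex and
`𝒳_t ⊆ int(dom 𝒬_{t+1})`. -/
theorem stmt_0
    (n p q T : ℕ) (hn : 1 ≤ n) (hp : 1 ≤ p) (hq : 1 ≤ q) (hT : 1 ≤ T)
    (x₀ : EuclideanSpace ℝ (Fin n))
    (𝒳 : ℕ → Set (EuclideanSpace ℝ (Fin n)))
    (h𝒳₀ : 𝒳 0 = {x₀})
    (h𝒳 : ∀ t, 1 ≤ t → t ≤ T → (𝒳 t).Nonempty ∧ Convex ℝ (𝒳 t) ∧ IsCompact (𝒳 t))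
    (f : ℕ → EuclideanSpace ℝ (Fin n) → EuclideanSpace ℝ (Fin n) → EReal)
    (hf : ∀ t, 1 ≤ t → t ≤ T →
      ERealProper (fun z : EuclideanSpace ℝ (Fin n) × EuclideanSpace ℝ (Fin n) => f t z.1 z.2) ∧
      LowerSemicontinuous
        (fun z : EuclideanSpace ℝ (Fin n) × EuclideanSpace ℝ (Fin n) => f t z.1 z.2) ∧
      ERealConvex
        (fun z : EuclideanSpace ℝ (Fin n) × EuclideanSpace ℝ (Fin n) => f t z.1 z.2) ∧
      (𝒳 t ×ˢ 𝒳 (t - 1)) ⊆ interior {z : EuclideanSpace ℝ (Fin n) × EuclideanSpace ℝ (Fin n) |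
        f t z.1 z.2 ≠ ⊤})
    (g : ℕ → Fin p → EuclideanSpace ℝ (Fin n) → EuclideanSpace ℝ (Fin n) → EReal)
    (hg : ∀ t, 1 ≤ t → t ≤ T → ∀ i,
      ERealProper (fun z : EuclideanSpace ℝ (Fin n) × EuclideanSpace ℝ (Fin n) => g t i z.1 z.2) ∧
      LowerSemicontinuous
        (fun z : EuclideanSpace ℝ (Fin n) × EuclideanSpace ℝ (Fin n) => g t i z.1 z.2) ∧
      ERealConvex
        (fun z : EuclideanSpace ℝ (Fin n) × EuclideanSpace ℝ (Fin n) => g t i z.1 z.2) ∧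
      (𝒳 t ×ˢ 𝒳 (t - 1)) ⊆ interior {z : EuclideanSpace ℝ (Fin n) × EuclideanSpace ℝ (Fin n) |
        g t i z.1 z.2 ≠ ⊤})
    (A B : ℕ → Matrix (Fin q) (Fin n) ℝ) (b : ℕ → Fin q → ℝ)
    (X : ℕ → EuclideanSpace ℝ (Fin n) → Set (EuclideanSpace ℝ (Fin n)))
    (hX : ∀ t y, X t y =
      {x ∈ 𝒳 t | (∀ i, g t i x y ≤ 0) ∧ (A t).mulVec x + (B t).mulVec y = b t})
    -- Assumption (H1)
    (hH1a : (X 1 x₀).Nonempty)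
    (hH1b : ∀ t, 2 ≤ t → t ≤ T →
      𝒳 (t - 1) ⊆ interior {y | (X t y ∩ intrinsicInterior ℝ (𝒳 t)).Nonempty})
    -- the cost-to-go functions
    (Q : ℕ → EuclideanSpace ℝ (Fin n) → EReal)
    (hQT : ∀ y, Q (T + 1) y = 0)
    (hQ : ∀ t, 1 ≤ t → t ≤ T → ∀ y,
      Q t y = sInf ((fun x => f t x y + Q (t + 1) x) '' X t y)) :
    ∀ t, 1 ≤ t → t ≤ T →
      ERealConvex (Q (t + 1)) ∧ 𝒳 t ⊆ interior {y | Q (t + 1) y ≠ ⊤} :=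
  stmt_0_general n p q T 𝒳 h𝒳 f hf g hg A B b X hX hH1b Q hQT hQ
end
end

section
/- For any infinite sequence (y^k)_{k≥1} contained in Y, one has lim_{k→∞} [f(y^k) − f^k(y^k)] = 0 if and only if lim_{k→∞} [f(y^k) − f^{k−k₀}(y^k)] = 0. -/
open Filter Topology

noncomputable section

/-- Auxiliary: if `g` is nondecreasing with step `k₀` and bounded above, then
`g (m + k₀) - g m → 0`. -/
lemma auxA (g : ℕ → ℝ) (k₀ : ℕ) (hk₀ : 0 < k₀) (C : ℝ)
    (hmono : ∀ m, g m ≤ g (m + k₀)) (hbd : ∀ m, g m ≤ C) :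
    Tendsto (fun m => g (m + k₀) - g m) atTop (𝓝 0) := by
  have hclass : ∀ r, Tendsto (fun j => g (r + (j + 1) * k₀) - g (r + j * k₀)) atTop (𝓝 0) := by
    intro r
    set h : ℕ → ℝ := fun j => g (r + j * k₀) with hh
    have hm : Monotone h := monotone_nat_of_le_succ (fun j => by
      have := hmono (r + j * k₀)
      simpa [hh, Nat.succ_mul, add_assoc] using this)
    have hb : BddAbove (Set.range h) := ⟨C, by rintro x ⟨j, rfl⟩; exact hbd _⟩
    have hl : Tendsto h atTop (𝓝 (⨆ j, h j)) := tendsto_atTop_ciSup hm hb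
    have h1 : Tendsto (fun j => h (j + 1)) atTop (𝓝 (⨆ j, h j)) :=
      hl.comp (tendsto_add_atTop_nat 1)
    simpa [hh] using h1.sub hl
  rw [Metric.tendsto_atTop]
  intro ε hε
  choose N hN using fun r => Metric.tendsto_atTop.mp (hclass r) ε hε
  refine ⟨(Finset.range k₀).sup N * k₀, fun m hm => ?_⟩
  set r := m % k₀ with hr
  set j := m / k₀ with hj
  have hrk : r < k₀ := Nat.mod_lt _ hk₀
  have hjN : (Finset.range k₀).sup N ≤ j := by
    rw [hj, Nat.le_div_iff_mul_le hk₀]; exact hm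
  have hNr : N r ≤ j := le_trans (Finset.le_sup (Finset.mem_range.mpr hrk)) hjN
  have hm1 : r + j * k₀ = m := Nat.mod_add_div' m k₀
  have hm2 : r + (j + 1) * k₀ = m + k₀ := by rw [add_mul, one_mul, ← add_assoc, hm1]
  have := hN r j hNr
  rwa [hm1, hm2] at this

/-- Lemma 5.2 of de Matos–Philpott–Finardi type: for monotone lower bounding
approximations that are uniformly Lipschitz on a compact set, the gap with a `k₀`-shifted
index vanishes iff the unshifted gap vanishes along any sequence in `Y`. -/
theorem stmt_4
    (n : ℕ) (Y : Set (EuclideanSpace ℝ (Fin n))) (hY : IsCompact Y)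
    (f : EuclideanSpace ℝ (Fin n) → EReal)
    (fk : ℕ → EuclideanSpace ℝ (Fin n) → EReal)
    (hfbot : ∀ x, f x ≠ ⊥)
    (hfkbot : ∀ k x, fk k x ≠ ⊥)
    (k₀ : ℕ) (hk₀ : 0 < k₀) (L : ℝ) (hL : 0 < L)
    -- (a): monotonicity and upper bound, with f finite on Y
    (ha : ∀ k, k₀ + 1 ≤ k → ∀ y ∈ Y,
      fk (k - k₀) y ≤ fk k y ∧ fk k y ≤ f y ∧ f y ≠ ⊤)
    -- (b): each fᵏ is (finite and) L-Lipschitz continuous on Y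
    (hfin : ∀ k, 1 ≤ k → ∀ y ∈ Y, fk k y ≠ ⊤)
    (hb : ∀ k, 1 ≤ k → ∀ y ∈ Y, ∀ y' ∈ Y,
      |(fk k y).toReal - (fk k y').toReal| ≤ L * ‖y - y'‖) :
    ∀ y : ℕ → EuclideanSpace ℝ (Fin n), (∀ k, y k ∈ Y) →
      (Tendsto (fun k => (f (y k)).toReal - (fk k (y k)).toReal) atTop (𝓝 0) ↔
       Tendsto (fun k => (f (y k)).toReal - (fk (k - k₀) (y k)).toReal) atTop (𝓝 0)) := by
  intro y hy
  constructor
  · -- hard direction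
    intro h1
    apply tendsto_of_subseq_tendsto
    intro ns hns
    obtain ⟨a, haY, φ, hφ, hcv⟩ := hY.tendsto_subseq (x := fun j => y (ns j)) (fun j => hy (ns j))
    refine ⟨φ, ?_⟩
    set K : ℕ → ℕ := fun j => ns (φ j) with hK_def
    have hK : Tendsto K atTop atTop := hns.comp hφ.tendsto_atTop
    have hcv' : Tendsto (fun j => y (K j)) atTop (𝓝 a) := hcv
    have hnorm : Tendsto (fun j => ‖y (K j) - a‖) atTop (𝓝 0) :=
      tendsto_iff_norm_sub_tendsto_zero.mp hcv'
    have hnormL : Tendsto (fun j => L * ‖y (K j) - a‖) atTop (𝓝 0) := by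
      simpa using hnorm.const_mul L
    have hev : ∀ᶠ j in atTop, k₀ + 1 ≤ K j := hK.eventually_ge_atTop (k₀ + 1)
    -- term 1
    have t1 : Tendsto (fun j => (f (y (K j))).toReal - (fk (K j) (y (K j))).toReal)
        atTop (𝓝 0) := h1.comp hK
    -- term 2
    have t2 : Tendsto (fun j => (fk (K j) (y (K j))).toReal - (fk (K j) a).toReal)
        atTop (𝓝 0) := by
      apply squeeze_zero_norm' ?_ hnormL
      filter_upwards [hev] with j hj
      have := hb (K j) (by omega) (y (K j)) (hy _) a haY
      simpa using this
    -- term 4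
    have t4 : Tendsto (fun j => (fk (K j - k₀) a).toReal - (fk (K j - k₀) (y (K j))).toReal)
        atTop (𝓝 0) := by
      apply squeeze_zero_norm' ?_ hnormL
      filter_upwards [hev] with j hj
      have h := hb (K j - k₀) (by omega) a haY (y (K j)) (hy _)
      calc ‖(fk (K j - k₀) a).toReal - (fk (K j - k₀) (y (K j))).toReal‖
          ≤ L * ‖a - y (K j)‖ := h
        _ = L * ‖y (K j) - a‖ := by rw [norm_sub_rev]
    -- term 3 : monotone convergence at the fixed point a
    set g : ℕ → ℝ := fun m => (fk (m + 1) a).toReal with hg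
    have gmono : ∀ m, g m ≤ g (m + k₀) := by
      intro m
      obtain ⟨hle, _, _⟩ := ha (m + 1 + k₀) (by omega) a haY
      have hmk : m + 1 + k₀ - k₀ = m + 1 := by omega
      rw [hmk] at hle
      have : (fk (m + 1) a).toReal ≤ (fk (m + 1 + k₀) a).toReal :=
        EReal.toReal_le_toReal hle (hfkbot _ _) (hfin (m + 1 + k₀) (by omega) a haY)
      have hix : m + k₀ + 1 = m + 1 + k₀ := by omega
      simpa [hg, hix] using this
    have gbd : ∀ m, g m ≤ (f a).toReal := by
      intro m
      obtain ⟨hle, hle2, htop⟩ := ha (m + 1 + k₀) (by omega) a haY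
      have hmk : m + 1 + k₀ - k₀ = m + 1 := by omega
      rw [hmk] at hle
      exact EReal.toReal_le_toReal (le_trans hle hle2) (hfkbot _ _) htop
    have T := auxA g k₀ hk₀ ((f a).toReal) gmono gbd
    have hKs : Tendsto (fun j => K j - (k₀ + 1)) atTop atTop :=
      (tendsto_sub_atTop_nat (k₀ + 1)).comp hK
    have T2 : Tendsto (fun j => g (K j - (k₀ + 1) + k₀) - g (K j - (k₀ + 1))) atTop (𝓝 0) :=
      T.comp hKs
    have t3 : Tendsto (fun j => (fk (K j) a).toReal - (fk (K j - k₀) a).toReal)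
        atTop (𝓝 0) := by
      apply T2.congr'
      filter_upwards [hev] with j hj
      have e1 : K j - (k₀ + 1) + k₀ + 1 = K j := by omega
      have e2 : K j - (k₀ + 1) + 1 = K j - k₀ := by omega
      simp only [hg]
      rw [e1, e2]
    -- combine
    have hsum := ((t1.add t2).add t3).add t4
    apply Tendsto.congr' ?_ (by simpa using hsum)
    filter_upwards with j
    ring
  · -- easy direction: squeeze
    intro h2
    apply squeeze_zero' ?_ ?_ h2
    · filter_upwards [eventually_ge_atTop (k₀ + 1)] with k hk
      obtain ⟨_, hle2, htop⟩ := ha k hk (y k) (hy k)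
      have : (fk k (y k)).toReal ≤ (f (y k)).toReal :=
        EReal.toReal_le_toReal hle2 (hfkbot _ _) htop
      linarith
    · filter_upwards [eventually_ge_atTop (k₀ + 1)] with k hk
      obtain ⟨hle, _, _⟩ := ha k hk (y k) (hy k)
      have : (fk (k - k₀) (y k)).toReal ≤ (fk k (y k)).toReal :=
        EReal.toReal_le_toReal hle (hfkbot _ _) (hfin k (by omega) (y k) (hy k))
      linarith
end
end

section
/- If (y^k)_{k≥1} is a sequence in Y with f^k(y^k) = f(y^k) for every k ≥ 1, then lim_{k→∞} [f(y^k) − f^{k−1}(y^k)] = 0. -/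
open Filter Topology

noncomputable section

/-- if the monotone, uniformly Lipschitz lower approximations `fᵏ` are tight at
the points `yᵏ` (i.e. `fᵏ(yᵏ) = f(yᵏ)`), then the gap with the previous approximation
vanishes: `f(yᵏ) − f^{k−1}(yᵏ) → 0`. -/
theorem stmt_5
    (n : ℕ) (Y : Set (EuclideanSpace ℝ (Fin n))) (hYne : Y.Nonempty) (hY : IsCompact Y)
    (f : EuclideanSpace ℝ (Fin n) → EReal)
    (fk : ℕ → EuclideanSpace ℝ (Fin n) → EReal)
    (hfbot : ∀ x, f x ≠ ⊥)
    (hfkbot : ∀ k x, fk k x ≠ ⊥)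
    (hffin : ∀ y ∈ Y, f y ≠ ⊤)
    (L : ℝ) (hL : 0 < L)
    (hmono : ∀ k, 2 ≤ k → ∀ y ∈ Y, fk (k - 1) y ≤ fk k y ∧ fk k y ≤ f y)
    (hfin : ∀ k, 1 ≤ k → ∀ y ∈ Y, fk k y ≠ ⊤)
    (hlip : ∀ k, 1 ≤ k → ∀ y ∈ Y, ∀ y' ∈ Y,
      |(fk k y).toReal - (fk k y').toReal| ≤ L * ‖y - y'‖)
    (y : ℕ → EuclideanSpace ℝ (Fin n))
    (hy : ∀ k, 1 ≤ k → y k ∈ Y)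
    (htight : ∀ k, 1 ≤ k → fk k (y k) = f (y k)) :
    Tendsto (fun k => (f (y k)).toReal - (fk (k - 1) (y k)).toReal) atTop (𝓝 0) := by
  set g : ℕ → ℝ := fun k => (f (y k)).toReal - (fk (k - 1) (y k)).toReal with hg
  -- monotone chain for the approximations
  have chain : ∀ k m, 1 ≤ k → k ≤ m → ∀ z ∈ Y, fk k z ≤ fk m z := by
    intro k m hk hkm z hz
    induction m with
    | zero => exact absurd hkm (by omega)
    | succ m ih =>
      rcases Nat.lt_or_ge k (m + 1) with h | h
      · have h1 : fk m z ≤ fk (m + 1) z := by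
          have := (hmono (m + 1) (by omega) z hz).1
          simpa using this
        exact le_trans (ih (by omega)) h1
      · have : k = m + 1 := by omega
        simp [this]
  -- key quantitative bound
  have key : ∀ k l, 1 ≤ k → k + 1 ≤ l → g l ≤ 2 * L * ‖y l - y k‖ := by
    intro k l hk hkl
    have hyk := hy k hk
    have hyl := hy l (by omega)
    have h1 : (fk k (y l)).toReal ≤ (fk (l - 1) (y l)).toReal :=
      EReal.toReal_le_toReal (chain k (l - 1) hk (by omega) _ hyl) (hfkbot _ _)
        (hfin (l - 1) (by omega) _ hyl)
    have h2 := abs_le.mp (hlip k hk _ hyk _ hyl)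
    have h3 : (fk l (y k)).toReal ≤ (f (y k)).toReal :=
      EReal.toReal_le_toReal ((hmono l (by omega) _ hyk).2) (hfkbot _ _) (hffin _ hyk)
    have h4 := abs_le.mp (hlip l (by omega) _ hyl _ hyk)
    have e1 : (f (y l)).toReal = (fk l (y l)).toReal := by rw [← htight l (by omega)]
    have e2 : (f (y k)).toReal = (fk k (y k)).toReal := by rw [← htight k hk]
    have e3 : ‖y k - y l‖ = ‖y l - y k‖ := norm_sub_rev _ _
    simp only [hg, e1]
    rw [e1] at *
    rw [e2] at h3
    rw [e3] at h2
    linarith [h2.1, h2.2, h4.1, h4.2]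
  -- nonnegativity of the gap
  have nonneg : ∀ l, 2 ≤ l → 0 ≤ g l := by
    intro l hl
    have hyl := hy l (by omega)
    have h := le_trans (hmono l hl _ hyl).1 (hmono l hl _ hyl).2
    have := EReal.toReal_le_toReal h (hfkbot _ _) (hffin _ hyl)
    simp only [hg]
    linarith
  -- conclusion by compactness / Cauchy subsequence argument
  rw [Metric.tendsto_atTop]
  by_contra hcon
  push_neg at hcon
  obtain ⟨ε, hε, hfr⟩ := hcon
  have hfr' : ∃ᶠ m in atTop, ε ≤ dist (g m) 0 := frequently_atTop.mpr hfr
  obtain ⟨φ, hφmono, hφ⟩ := extraction_of_frequently_atTop hfr'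
  set u : ℕ → EuclideanSpace ℝ (Fin n) := fun j => y (φ (j + 2)) with hu
  have hune : ∀ j, u j ∈ Y := fun j => hy _ (by have := hφmono.le_apply (x := j + 2); omega)
  obtain ⟨x, hx, ψ, hψ, hconv⟩ := hY.tendsto_subseq hune
  have hc : CauchySeq (u ∘ ψ) := hconv.cauchySeq
  rw [Metric.cauchySeq_iff'] at hc
  obtain ⟨N, hN⟩ := hc (ε / (2 * L)) (by positivity)
  have hd := hN (N + 1) (by omega)
  set k := φ (ψ N + 2) with hkdef
  set l := φ (ψ (N + 1) + 2) with hldef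
  have hk1 : 1 ≤ k := by have := hφmono.le_apply (x := ψ N + 2); omega
  have hkl : k + 1 ≤ l := by
    have h0 : ψ N < ψ (N + 1) := hψ (by omega)
    have := hφmono (show ψ N + 2 < ψ (N + 1) + 2 by omega)
    omega
  have hkey := key k l hk1 hkl
  have hdist : dist (u (ψ (N + 1))) (u (ψ N)) = ‖y l - y k‖ := by
    simp only [hu, hkdef, hldef, dist_eq_norm]
  simp only [Function.comp_apply] at hd
  rw [hdist] at hd
  have hbound : 2 * L * ‖y l - y k‖ < 2 * L * (ε / (2 * L)) :=
    mul_lt_mul_of_pos_left hd (by positivity)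
  have heq : 2 * L * (ε / (2 * L)) = ε := by field_simp
  have hεl : ε ≤ g l := by
    have := hφ (ψ (N + 1) + 2)
    have hgl : dist (g l) 0 = g l := by
      rw [Real.dist_eq, sub_zero, abs_of_nonneg (nonneg l (by omega))]
    rw [hgl] at this
    exact this
  linarith
end
end

section
/- Let (k(ℓ))_{ℓ≥1} be a strictly increasing sequence of positive integers and (y^ℓ)_{ℓ≥1} a sequence in Y such that f^{k(ℓ)}(y^ℓ) = f(y^ℓ) for every ℓ ≥ 1. Then lim_{ℓ→∞} [f(y^ℓ) − f^{k(ℓ)−1}(y^ℓ)] = 0. -/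
open Filter Topology

noncomputable section

/-- subsequence version of Statement 5.  If `k(ℓ)` is strictly increasing and the
approximations are tight along `(y^ℓ)`, i.e. `f^{k(ℓ)}(y^ℓ) = f(y^ℓ)`, then
`f(y^ℓ) − f^{k(ℓ)−1}(y^ℓ) → 0`. -/
theorem stmt_6
    (n : ℕ) (Y : Set (EuclideanSpace ℝ (Fin n))) (hYne : Y.Nonempty) (hY : IsCompact Y)
    (f : EuclideanSpace ℝ (Fin n) → EReal)
    (fk : ℕ → EuclideanSpace ℝ (Fin n) → EReal)
    (hfbot : ∀ x, f x ≠ ⊥)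
    (hfkbot : ∀ k x, fk k x ≠ ⊥)
    (hffin : ∀ y ∈ Y, f y ≠ ⊤)
    (L : ℝ) (hL : 0 < L)
    (hmono : ∀ k, 2 ≤ k → ∀ y ∈ Y, fk (k - 1) y ≤ fk k y ∧ fk k y ≤ f y)
    (hfin : ∀ k, 1 ≤ k → ∀ y ∈ Y, fk k y ≠ ⊤)
    (hlip : ∀ k, 1 ≤ k → ∀ y ∈ Y, ∀ y' ∈ Y,
      |(fk k y).toReal - (fk k y').toReal| ≤ L * ‖y - y'‖)
    (kseq : ℕ → ℕ) (hkseq : StrictMono kseq) (hkseq1 : ∀ ℓ, 1 ≤ kseq ℓ)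
    (y : ℕ → EuclideanSpace ℝ (Fin n))
    (hy : ∀ ℓ, y ℓ ∈ Y)
    (htight : ∀ ℓ, fk (kseq ℓ) (y ℓ) = f (y ℓ)) :
    Tendsto (fun ℓ => (f (y ℓ)).toReal - (fk (kseq ℓ - 1) (y ℓ)).toReal) atTop (𝓝 0) := by
  set gap : ℕ → ℝ := fun ℓ => (f (y ℓ)).toReal - (fk (kseq ℓ - 1) (y ℓ)).toReal with hgap
  -- monotone chain
  have hchain : ∀ a b : ℕ, 1 ≤ a → a ≤ b → ∀ z ∈ Y, fk a z ≤ fk b z := by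
    intro a b ha hab z hz
    induction b with
    | zero => omega
    | succ b ih =>
      rcases Nat.lt_or_ge a (b + 1) with h | h
      · have hb : a ≤ b := by omega
        have h1 : 1 ≤ b := le_trans ha hb
        have := (hmono (b + 1) (by omega) z hz).1
        simp only [Nat.add_sub_cancel] at this
        exact le_trans (ih hb) this
      · have : a = b + 1 := by omega
        subst this; exact le_rfl
  -- kseq bounds
  have hk2 : ∀ ℓ : ℕ, 1 ≤ ℓ → 2 ≤ kseq ℓ := by
    intro ℓ hℓ
    have h0 : kseq 0 < kseq ℓ := hkseq (by omega)
    have := hkseq1 0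
    omega
  -- gap is nonnegative for ℓ ≥ 1
  have hgap_nonneg : ∀ ℓ : ℕ, 1 ≤ ℓ → 0 ≤ gap ℓ := by
    intro ℓ hℓ
    have h2 := hk2 ℓ hℓ
    have hle : fk (kseq ℓ - 1) (y ℓ) ≤ f (y ℓ) :=
      le_trans (hmono (kseq ℓ) h2 (y ℓ) (hy ℓ)).1 (hmono (kseq ℓ) h2 (y ℓ) (hy ℓ)).2
    have := EReal.toReal_le_toReal hle (hfkbot _ _) (hffin _ (hy ℓ))
    simp only [hgap]; linarith
  -- key pairwise bound
  have hkey : ∀ ℓ ℓ' : ℕ, ℓ < ℓ' → gap ℓ' ≤ 2 * L * ‖y ℓ' - y ℓ‖ := by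
    intro ℓ ℓ' hlt
    have hℓ'1 : 1 ≤ ℓ' := by omega
    have h2 : 2 ≤ kseq ℓ' := hk2 ℓ' hℓ'1
    have hks : kseq ℓ < kseq ℓ' := hkseq hlt
    have h1 : kseq ℓ ≤ kseq ℓ' - 1 := by omega
    set d := ‖y ℓ' - y ℓ‖ with hd
    -- fk (kseq ℓ) (y ℓ') ≤ fk (kseq ℓ' - 1) (y ℓ')
    have hA : (fk (kseq ℓ) (y ℓ')).toReal ≤ (fk (kseq ℓ' - 1) (y ℓ')).toReal :=
      EReal.toReal_le_toReal (hchain _ _ (hkseq1 ℓ) h1 (y ℓ') (hy ℓ')) (hfkbot _ _)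
        (hfin _ (by omega) _ (hy ℓ'))
    -- Lipschitz at level kseq ℓ'
    have hB := hlip (kseq ℓ') (by omega) (y ℓ') (hy ℓ') (y ℓ) (hy ℓ)
    -- fk (kseq ℓ') (y ℓ) ≤ f (y ℓ)
    have hC : (fk (kseq ℓ') (y ℓ)).toReal ≤ (f (y ℓ)).toReal :=
      EReal.toReal_le_toReal (hmono (kseq ℓ') h2 (y ℓ) (hy ℓ)).2 (hfkbot _ _)
        (hffin _ (hy ℓ))
    -- Lipschitz at level kseq ℓ
    have hD := hlip (kseq ℓ) (hkseq1 ℓ) (y ℓ) (hy ℓ) (y ℓ') (hy ℓ')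
    have hnorm : ‖y ℓ - y ℓ'‖ = d := by rw [hd, norm_sub_rev]
    rw [hnorm] at hD
    have hE : (fk (kseq ℓ) (y ℓ)).toReal = (f (y ℓ)).toReal := by rw [htight ℓ]
    have hF : (fk (kseq ℓ') (y ℓ')).toReal = (f (y ℓ')).toReal := by rw [htight ℓ']
    have hB' := abs_le.mp hB
    have hD' := abs_le.mp hD
    simp only [hgap]
    linarith [hB'.1, hB'.2, hD'.1, hD'.2]
  -- now the limit, by contradiction
  rw [Metric.tendsto_atTop]
  by_contra hcon
  push_neg at hcon
  obtain ⟨ε, hε, hfreq⟩ := hcon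
  -- extract strictly monotone subsequence where gap ≥ ε
  have hfreq' : ∀ N : ℕ, ∃ m ≥ N, ε ≤ gap m := by
    intro N
    obtain ⟨m, hm, hdist⟩ := hfreq (max N 1)
    refine ⟨m, le_trans (le_max_left _ _) hm, ?_⟩
    rw [Real.dist_eq, sub_zero] at hdist
    have hnn := hgap_nonneg m (le_trans (le_max_right N 1) hm)
    rw [abs_of_nonneg hnn] at hdist
    linarith
  obtain ⟨φ, hφmono, hφ⟩ := Filter.extraction_of_frequently_atTop
    (Filter.frequently_atTop.mpr hfreq')
  -- compactness: convergent subsequence of y ∘ φ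
  obtain ⟨a, _, ψ, hψmono, hψtend⟩ := hY.tendsto_subseq (fun j => hy (φ j))
  have hcauchy : CauchySeq (fun j => y (φ (ψ j))) := hψtend.cauchySeq
  rw [Metric.cauchySeq_iff] at hcauchy
  obtain ⟨N, hN⟩ := hcauchy (ε / (2 * L)) (by positivity)
  have hlt : φ (ψ N) < φ (ψ (N + 1)) := hφmono (hψmono (by omega))
  have hb := hkey _ _ hlt
  have hdist := hN (N + 1) (by omega) N (le_refl N)
  rw [dist_eq_norm] at hdist
  have hge : ε ≤ gap (φ (ψ (N + 1))) := hφ (ψ (N + 1))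
  have : 2 * L * ‖y (φ (ψ (N + 1))) - y (φ (ψ N))‖ < 2 * L * (ε / (2 * L)) := by
    apply mul_lt_mul_of_pos_left hdist (by positivity)
  rw [mul_div_cancel₀ _ (by positivity : (2 : ℝ) * L ≠ 0)] at this
  linarith
end
end

section
/- Let (x^k)_{k≥1} ⊆ 𝒳 and (y^k)_{k≥1} ⊆ 𝒴 be sequences such that A x^k + B y^k = b for every k and limsup_{k→∞} g_i(x^k, y^k) ≤ 0 for every i = 1,…,p. Then liminf_{k→∞} [F(x^k, y^k) − Q(y^k)] ≥ 0. -/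
open Matrix Set Filter Topology

/-!
Suppose `liminf [F(xᵏ,yᵏ) − Q(yᵏ)] < c < 0`. By compactness of `𝒳 × 𝒴` some subsequence with
`F(xᵏ,yᵏ) < c + Q(yᵏ)` converges to a point `(x̄, ȳ)`. Lower semicontinuity of the `gᵢ` and
closedness of the linear constraint make `x̄` feasible for `ȳ`, so `Q(ȳ) ≤ F(x̄, ȳ)`, while lower
semicontinuity of `F` and continuity of `Q` give `F(x̄, ȳ) ≤ c + Q(ȳ)`: a contradiction.
-/

section
variable {X β : Type*} [TopologicalSpace X] [CompleteLinearOrder β] {f : X → β} {z : X}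

theorem LowerSemicontinuous.le_liminf_comp (hf : LowerSemicontinuous f) {u : ℕ → X}
    (hu : Tendsto u atTop (𝓝 z)) : f z ≤ liminf (f ∘ u) atTop :=
  (hf.le_liminf z).trans (liminf_le_liminf_of_le hu)

theorem LowerSemicontinuous.le_of_tendsto_of_le [TopologicalSpace β] [OrderTopology β]
    (hf : LowerSemicontinuous f) {u : ℕ → X} (hu : Tendsto u atTop (𝓝 z)) {v : ℕ → β} {r : β}
    (hv : Tendsto v atTop (𝓝 r)) (hle : ∀ k, f (u k) ≤ v k) : f z ≤ r :=
  calc f z ≤ liminf (f ∘ u) atTop := hf.le_liminf_comp hu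
    _ ≤ liminf v atTop := liminf_le_liminf (.of_forall hle)
    _ = r := hv.liminf_eq

theorem LowerSemicontinuous.le_limsup_of_tendsto_subseq (hf : LowerSemicontinuous f)
    {w : ℕ → X} {φ : ℕ → ℕ} (hφ : StrictMono φ) (hw : Tendsto (w ∘ φ) atTop (𝓝 z)) :
    f z ≤ limsup (f ∘ w) atTop :=
  calc f z ≤ liminf (f ∘ w ∘ φ) atTop := hf.le_liminf_comp hw
    _ ≤ limsup (f ∘ w ∘ φ) atTop := liminf_le_limsup
    _ ≤ limsup (f ∘ w) atTop := limsup_le_limsup_of_le (u := f ∘ w) hφ.tendsto_atTop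

end

theorem IsCompact.exists_subseq_tendsto_of_frequently {X : Type*} [TopologicalSpace X]
    [FirstCountableTopology X] {K : Set X} (hK : IsCompact K) {u : ℕ → X} (hu : ∀ k, u k ∈ K)
    {P : ℕ → Prop} (hP : ∃ᶠ k in atTop, P k) :
    ∃ z ∈ K, ∃ φ : ℕ → ℕ, StrictMono φ ∧ Tendsto (u ∘ φ) atTop (𝓝 z) ∧ ∀ k, P (φ k) := by
  obtain ⟨ψ, hψ, hPψ⟩ := extraction_of_frequently_atTop hP
  obtain ⟨z, hz, χ, hχ, hlim⟩ := hK.tendsto_subseq fun k => hu (ψ k)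
  exact ⟨z, hz, ψ ∘ χ, hψ.comp hχ, hlim, fun k => hPψ (χ k)⟩

theorem isClosed_setOf_mulVec_add_mulVec_eq {m n : Type*} [Fintype n] (A B : Matrix m n ℝ)
    (b : m → ℝ) :
    IsClosed {z : EuclideanSpace ℝ n × EuclideanSpace ℝ n | A *ᵥ z.1 + B *ᵥ z.2 = b} :=
  isClosed_eq (by fun_prop) continuous_const

theorem stmt_7_general
    (n p q : ℕ)
    (𝒳 𝒴 : Set (EuclideanSpace ℝ (Fin n)))
    (h𝒳cpt : IsCompact 𝒳)
    (h𝒴cpt : IsCompact 𝒴)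
    (A B : Matrix (Fin q) (Fin n) ℝ) (b : Fin q → ℝ)
    (F : EuclideanSpace ℝ (Fin n) → EuclideanSpace ℝ (Fin n) → EReal)
    (hFlsc : LowerSemicontinuous
      (fun z : EuclideanSpace ℝ (Fin n) × EuclideanSpace ℝ (Fin n) => F z.1 z.2))
    (g : Fin p → EuclideanSpace ℝ (Fin n) → EuclideanSpace ℝ (Fin n) → EReal)
    (hglsc : ∀ i, LowerSemicontinuous
      (fun z : EuclideanSpace ℝ (Fin n) × EuclideanSpace ℝ (Fin n) => g i z.1 z.2))
    (Q : EuclideanSpace ℝ (Fin n) → EReal)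
    (hQ : ∀ y, Q y = sInf ((fun x => F x y) ''
      {x ∈ 𝒳 | (∀ i, g i x y ≤ 0) ∧ A.mulVec x + B.mulVec y = b}))
    -- Q is real-valued and continuous on 𝒴
    (Qr : EuclideanSpace ℝ (Fin n) → ℝ)
    (hQr : ContinuousOn Qr 𝒴) (hQrQ : ∀ y ∈ 𝒴, Q y = (Qr y : EReal))
    (x y : ℕ → EuclideanSpace ℝ (Fin n))
    (hx : ∀ k, x k ∈ 𝒳) (hy : ∀ k, y k ∈ 𝒴)
    (heq : ∀ k, A.mulVec (x k) + B.mulVec (y k) = b)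
    (hg : ∀ i, limsup (fun k => g i (x k) (y k)) atTop ≤ 0) :
    0 ≤ liminf (fun k => F (x k) (y k) - (Qr (y k) : EReal)) atTop := by
  by_contra! hlt
  obtain ⟨c, hc, hc0⟩ := EReal.exists_between_coe_real hlt
  obtain ⟨⟨x₀, y₀⟩, ⟨hx₀, hy₀⟩, φ, hφ, hlim, hbelow⟩ :=
    (h𝒳cpt.prod h𝒴cpt).exists_subseq_tendsto_of_frequently (u := fun k => (x k, y k))
      (fun k => ⟨hx k, hy k⟩) (frequently_lt_of_liminf_lt (by isBoundedDefault) hc)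
  have hfeas : x₀ ∈ {x ∈ 𝒳 | (∀ i, g i x y₀ ≤ 0) ∧ A.mulVec x + B.mulVec y₀ = b} :=
    ⟨hx₀, fun i => ((hglsc i).le_limsup_of_tendsto_subseq hφ hlim).trans (hg i),
      (isClosed_setOf_mulVec_add_mulVec_eq A B b).mem_of_tendsto hlim
        (.of_forall fun k => heq (φ k))⟩
  have hQlim : Tendsto (fun k => Qr (y (φ k))) atTop (𝓝 (Qr y₀)) :=
    (hQr y₀ hy₀).tendsto.comp <| tendsto_nhdsWithin_of_tendsto_nhds_of_eventually_within _
      ((continuous_snd.tendsto _).comp hlim) (.of_forall fun k => hy (φ k))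
  have hF : F x₀ y₀ ≤ ((c + Qr y₀ : ℝ) : EReal) :=
    hFlsc.le_of_tendsto_of_le hlim
      ((continuous_coe_real_ereal.tendsto _).comp (tendsto_const_nhds.add hQlim)) fun k =>
        ((EReal.sub_lt_iff (.inl (EReal.coe_ne_bot _)) (.inl (EReal.coe_ne_top _))).1
          (hbelow k)).le
  have hQF : ((Qr y₀ : ℝ) : EReal) ≤ ((c + Qr y₀ : ℝ) : EReal) :=
    calc ((Qr y₀ : ℝ) : EReal) = Q y₀ := (hQrQ y₀ hy₀).symm
      _ ≤ F x₀ y₀ := (hQ y₀).symm ▸ sInf_le ⟨x₀, hfeas, rfl⟩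
      _ ≤ _ := hF
  have : Qr y₀ ≤ c + Qr y₀ := EReal.coe_le_coe_iff.1 hQF
  linarith [EReal.coe_lt_coe_iff.1 hc0]

/-- along sequences that are asymptotically feasible (linear constraints hold and
`limsup gᵢ ≤ 0`), the objective value asymptotically dominates the value function:
`liminf [F(xᵏ,yᵏ) − Q(yᵏ)] ≥ 0`. -/
theorem stmt_7
    (n p q : ℕ)
    (𝒳 𝒴 : Set (EuclideanSpace ℝ (Fin n)))
    (h𝒳ne : 𝒳.Nonempty) (h𝒳cpt : IsCompact 𝒳)
    (h𝒴ne : 𝒴.Nonempty) (h𝒴cpt : IsCompact 𝒴)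
    (A B : Matrix (Fin q) (Fin n) ℝ) (b : Fin q → ℝ)
    (F : EuclideanSpace ℝ (Fin n) → EuclideanSpace ℝ (Fin n) → EReal)
    (hFlsc : LowerSemicontinuous
      (fun z : EuclideanSpace ℝ (Fin n) × EuclideanSpace ℝ (Fin n) => F z.1 z.2))
    (hFbot : ∀ x y, F x y ≠ ⊥)
    (g : Fin p → EuclideanSpace ℝ (Fin n) → EuclideanSpace ℝ (Fin n) → EReal)
    (hglsc : ∀ i, LowerSemicontinuous
      (fun z : EuclideanSpace ℝ (Fin n) × EuclideanSpace ℝ (Fin n) => g i z.1 z.2))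
    (Q : EuclideanSpace ℝ (Fin n) → EReal)
    (hQ : ∀ y, Q y = sInf ((fun x => F x y) ''
      {x ∈ 𝒳 | (∀ i, g i x y ≤ 0) ∧ A.mulVec x + B.mulVec y = b}))
    -- Q is real-valued and continuous on 𝒴
    (Qr : EuclideanSpace ℝ (Fin n) → ℝ)
    (hQr : ContinuousOn Qr 𝒴) (hQrQ : ∀ y ∈ 𝒴, Q y = (Qr y : EReal))
    (x y : ℕ → EuclideanSpace ℝ (Fin n))
    (hx : ∀ k, x k ∈ 𝒳) (hy : ∀ k, y k ∈ 𝒴)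
    (heq : ∀ k, A.mulVec (x k) + B.mulVec (y k) = b)
    (hg : ∀ i, limsup (fun k => g i (x k) (y k)) atTop ≤ 0) :
    0 ≤ liminf (fun k => F (x k) (y k) - (Qr (y k) : EReal)) atTop :=
  stmt_7_general n p q 𝒳 𝒴 h𝒳cpt h𝒴cpt A B b F hFlsc g hglsc Q hQ Qr hQr hQrQ x y hx hy heq hg
end

section
/- For t ∈ {2,…,T}, the function Q̂ is convex, 𝒳_{t−1} ⊆ int(dom Q̂), and consequently the subdifferential ∂Q̂(y) = {β ∈ ℝⁿ : Q̂(y′) ≥ Q̂(y) + ⟨β, y′ − y⟩ for all y′ ∈ ℝⁿ} is nonempty for every y ∈ 𝒳_{t−1}. -/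
/-!
`Q̂` is the value function of a parametric program whose objective and feasible graph are jointly
convex, so it is convex: near-optimal points for two parameters combine into a feasible point for
the combined parameter. Feasible sets lie in the compact `𝒳_t`, so `Q̂ > -∞`. Since `ĝ ≤ g`, every
`y` with `X_t(y) ≠ ∅` has `Q̂ y < ⊤`, and (H1) puts `𝒳_{t-1}` in the interior of `dom Q̂`. At an
interior point of its domain a convex function has a subgradient: separate `(y, Q̂ y)` from the
open strict epigraph over the interior of the domain.
-/

open Matrix Set

noncomputable section

theorem ERealConvex.convexOn_toReal {E : Type*} [AddCommGroup E] [Module ℝ E] {φ : E → EReal}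
    (hφ : ERealConvex φ) (hbot : ∀ x, φ x ≠ ⊥) :
    ConvexOn ℝ {x | φ x ≠ ⊤} fun x => (φ x).toReal := by
  have hcombo {x₁ x₂ : E} (h₁ : φ x₁ ≠ ⊤) (h₂ : φ x₂ ≠ ⊤) {a b : ℝ} (ha : 0 ≤ a) (hb : 0 ≤ b)
      (hab : a + b = 1) :
      φ (a • x₁ + b • x₂) ≤ ((a * (φ x₁).toReal + b * (φ x₂).toReal : ℝ) : EReal) :=
    hφ (x := (x₁, (φ x₁).toReal)) (y := (x₂, (φ x₂).toReal))
      (EReal.coe_toReal h₁ (hbot x₁)).ge (EReal.coe_toReal h₂ (hbot x₂)).ge ha hb hab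
  refine ⟨fun x₁ h₁ x₂ h₂ a b ha hb hab => ?_, fun x₁ h₁ x₂ h₂ a b ha hb hab => ?_⟩
  · exact ne_top_of_le_ne_top (EReal.coe_ne_top _) (hcombo h₁ h₂ ha hb hab)
  · exact (EReal.toReal_le_toReal (hcombo h₁ h₂ ha hb hab) (hbot _)
      (EReal.coe_ne_top _)).trans_eq (EReal.toReal_coe _)

section Subgradient

variable {E : Type*} [NormedAddCommGroup E] [InnerProductSpace ℝ E] [FiniteDimensional ℝ E]
  {U D : Set E} {q : E → ℝ} {y : E}

theorem ConvexOn.isOpen_strict_epigraph (hq : ConvexOn ℝ U q) (hU : IsOpen U) :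
    IsOpen {p : E × ℝ | p.1 ∈ U ∧ q p.1 < p.2} := by
  have hcont : ContinuousOn (fun p : E × ℝ => (q p.1, p.2)) (U ×ˢ univ) :=
    ((hq.continuousOn hU).comp continuousOn_fst fun _ hp => hp.1).prodMk continuousOn_snd
  convert hcont.isOpen_inter_preimage (hU.prod isOpen_univ)
    (isOpen_lt continuous_fst continuous_snd) using 1
  ext p
  simp

/-- The functional separating `(y, q y)` from the strict epigraph has negative vertical
component `c`; rescaled by `(-c)⁻¹` its horizontal part is the subgradient. -/
theorem ConvexOn.exists_subgradient_of_isOpen (hq : ConvexOn ℝ U q) (hU : IsOpen U)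
    (hy : y ∈ U) : ∃ β : E, ∀ y' ∈ U, q y + inner ℝ β (y' - y) ≤ q y' := by
  obtain ⟨f, hf⟩ := geometric_hahn_banach_open_point hq.convex_strict_epigraph
    (hq.isOpen_strict_epigraph hU) (x := (y, q y)) fun h => lt_irrefl _ h.2
  set c := f (0, 1)
  set ℓ := f.comp (ContinuousLinearMap.inl ℝ E ℝ)
  have hf_apply (x : E) (r : ℝ) : f (x, r) = ℓ x + r * c := by
    have : (x, r) = ContinuousLinearMap.inl ℝ E ℝ x + r • ((0 : E), (1 : ℝ)) := by simp
    rw [this, map_add, map_smul, smul_eq_mul]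
    rfl
  have hc : c < 0 := by
    have := hf (y, q y + 1) ⟨hy, lt_add_one _⟩
    rw [hf_apply, hf_apply] at this
    linarith
  refine ⟨(InnerProductSpace.toDual ℝ E).symm ((-c)⁻¹ • ℓ), fun y' hy' => ?_⟩
  rw [InnerProductSpace.toDual_symm_apply]
  refine le_of_forall_gt_imp_ge_of_dense fun r hr => ?_
  have := hf (y', r) ⟨hy', hr⟩
  rw [hf_apply, hf_apply] at this
  rw [_root_.smul_apply, map_sub, smul_eq_mul]
  have : (-c)⁻¹ * (ℓ y' - ℓ y) ≤ r - q y := by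
    rw [inv_mul_le_iff₀ (neg_pos.2 hc)]
    linarith
  linarith

/-- The subgradient on `interior D` extends to `D` through the midpoint of `[y, y']`,
which lies in `interior D`. -/
theorem ConvexOn.exists_subgradient_of_mem_interior (hq : ConvexOn ℝ D q)
    (hy : y ∈ interior D) : ∃ β : E, ∀ y' ∈ D, q y + inner ℝ β (y' - y) ≤ q y' := by
  obtain ⟨β, hβ⟩ := (hq.subset interior_subset hq.1.interior).exists_subgradient_of_isOpen
    isOpen_interior hy
  refine ⟨β, fun y' hy' => ?_⟩
  have hmid := hβ _ <| hq.1.combo_interior_self_mem_interior hy hy' (a := 1 / 2) (b := 1 / 2)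
    (by norm_num) (by norm_num) (by norm_num)
  have hconv := hq.2 (interior_subset hy) hy' (by norm_num : (0 : ℝ) ≤ 1 / 2)
    (by norm_num : (0 : ℝ) ≤ 1 / 2) (by norm_num)
  have : (1 / 2 : ℝ) • y + (1 / 2 : ℝ) • y' - y = (1 / 2 : ℝ) • (y' - y) := by module
  rw [this, real_inner_smul_right] at hmid
  simp only [smul_eq_mul] at hconv
  linarith

theorem ERealConvex.exists_subgradient {φ : E → EReal} (hφ : ERealConvex φ)
    (hbot : ∀ x, φ x ≠ ⊥) (hy : y ∈ interior {x | φ x ≠ ⊤}) :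
    ∃ β : E, ∀ y', φ y + (inner ℝ β (y' - y) : ℝ) ≤ φ y' := by
  obtain ⟨β, hβ⟩ := (hφ.convexOn_toReal hbot).exists_subgradient_of_mem_interior hy
  refine ⟨β, fun y' => ?_⟩
  by_cases hy' : φ y' = ⊤
  · simp [hy']
  rw [← EReal.coe_toReal (interior_subset hy) (hbot y), ← EReal.coe_toReal hy' (hbot y'),
    ← EReal.coe_add, EReal.coe_le_coe_iff]
  exact hβ y' hy'

end Subgradient

section ValueFunction

variable {E F : Type*} {C : Set (E × F)} {φ : E × F → ℝ} {x : E} {y : F}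

/-- Parameters `y` with empty fiber get the value `sInf ∅ = ⊤`. -/
def valueFunction (C : Set (E × F)) (φ : E × F → ℝ) (y : F) : EReal :=
  sInf ((fun x => (φ (x, y) : EReal)) '' {x | (x, y) ∈ C})

theorem valueFunction_le (h : (x, y) ∈ C) : valueFunction C φ y ≤ φ (x, y) :=
  sInf_le ⟨x, h, rfl⟩

theorem valueFunction_ne_top (h : (x, y) ∈ C) : valueFunction C φ y ≠ ⊤ :=
  ne_top_of_le_ne_top (EReal.coe_ne_top _) (valueFunction_le h)

theorem valueFunction_lt_iff {r : EReal} :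
    valueFunction C φ y < r ↔ ∃ x, (x, y) ∈ C ∧ (φ (x, y) : EReal) < r := by
  simp [valueFunction, sInf_lt_iff]

theorem valueFunction_ne_bot [TopologicalSpace E] (hK : IsCompact {x | (x, y) ∈ C})
    (hφ : ContinuousOn (fun x => φ (x, y)) {x | (x, y) ∈ C}) : valueFunction C φ y ≠ ⊥ := by
  obtain ⟨m, hm⟩ := hK.bddBelow_image hφ
  refine ne_bot_of_le_ne_bot (EReal.coe_ne_bot m) (le_sInf ?_)
  rintro _ ⟨x, hx, rfl⟩
  exact EReal.coe_le_coe_iff.2 (hm ⟨x, hx, rfl⟩)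

theorem erealConvex_valueFunction [AddCommGroup E] [Module ℝ E] [AddCommGroup F] [Module ℝ F]
    (hφ : ConvexOn ℝ C φ) : ERealConvex (valueFunction C φ) := by
  rintro ⟨y₁, z₁⟩ h₁ ⟨y₂, z₂⟩ h₂ a b ha hb hab
  simp only [Prod.smul_mk, Prod.mk_add_mk, smul_eq_mul] at h₁ h₂ ⊢
  refine EReal.le_of_forall_lt_iff_le.1 fun r hr => ?_
  set δ := r - (a * z₁ + b * z₂)
  have hδ : 0 < δ := sub_pos.2 (EReal.coe_lt_coe_iff.1 hr)
  obtain ⟨x₁, hx₁, hφ₁⟩ := valueFunction_lt_iff.1 <|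
    h₁.trans_lt (EReal.coe_lt_coe_iff.2 (lt_add_of_pos_right z₁ hδ))
  obtain ⟨x₂, hx₂, hφ₂⟩ := valueFunction_lt_iff.1 <|
    h₂.trans_lt (EReal.coe_lt_coe_iff.2 (lt_add_of_pos_right z₂ hδ))
  have hcombo : (a • x₁ + b • x₂, a • y₁ + b • y₂) ∈ C := by
    simpa using hφ.1 hx₁ hx₂ ha hb hab
  refine (valueFunction_le hcombo).trans (EReal.coe_le_coe_iff.2 ?_)
  calc φ (a • x₁ + b • x₂, a • y₁ + b • y₂) ≤ a * φ (x₁, y₁) + b * φ (x₂, y₂) := by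
        simpa using hφ.2 hx₁ hx₂ ha hb hab
    _ ≤ a * (z₁ + δ) + b * (z₂ + δ) := by
        gcongr
        · exact (EReal.coe_lt_coe_iff.1 hφ₁).le
        · exact (EReal.coe_lt_coe_iff.1 hφ₂).le
    _ = r := by linear_combination δ * hab

end ValueFunction

section FeasibleGraph

variable {n q : ℕ} {ι : Type*} {K : Set (EuclideanSpace ℝ (Fin n))}
  {g : ι → EuclideanSpace ℝ (Fin n) → EuclideanSpace ℝ (Fin n) → ℝ}
  {A B : Matrix (Fin q) (Fin n) ℝ} {b : Fin q → ℝ}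

def feasibleGraph (K : Set (EuclideanSpace ℝ (Fin n)))
    (g : ι → EuclideanSpace ℝ (Fin n) → EuclideanSpace ℝ (Fin n) → ℝ)
    (A B : Matrix (Fin q) (Fin n) ℝ) (b : Fin q → ℝ) :
    Set (EuclideanSpace ℝ (Fin n) × EuclideanSpace ℝ (Fin n)) :=
  {z | z.1 ∈ K ∧ (∀ i, g i z.1 z.2 ≤ 0) ∧ A *ᵥ z.1 + B *ᵥ z.2 = b}

theorem convex_feasibleGraph (hK : Convex ℝ K)
    (hg : ∀ i, ConvexOn ℝ univ fun z : EuclideanSpace ℝ (Fin n) × EuclideanSpace ℝ (Fin n) =>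
      g i z.1 z.2) :
    Convex ℝ (feasibleGraph K g A B b) := by
  rintro ⟨x₁, y₁⟩ ⟨hK₁, hg₁, hA₁⟩ ⟨x₂, y₂⟩ ⟨hK₂, hg₂, hA₂⟩ θ μ hθ hμ hθμ
  refine ⟨hK hK₁ hK₂ hθ hμ hθμ, fun i => ?_, ?_⟩
  · have := (hg i).2 (mem_univ (x₁, y₁)) (mem_univ (x₂, y₂)) hθ hμ hθμ
    simp only [Prod.smul_mk, Prod.mk_add_mk, smul_eq_mul] at this ⊢
    exact this.trans (add_nonpos (mul_nonpos_of_nonneg_of_nonpos hθ (hg₁ i))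
      (mul_nonpos_of_nonneg_of_nonpos hμ (hg₂ i)))
  · simp only [Prod.smul_mk, Prod.mk_add_mk, WithLp.ofLp_add, WithLp.ofLp_smul, mulVec_add,
      mulVec_smul]
    rw [add_add_add_comm, ← smul_add, ← smul_add, hA₁, hA₂, ← add_smul, hθμ, one_smul]

theorem isClosed_feasibleGraph (hK : IsClosed K)
    (hg : ∀ i, Continuous fun z : EuclideanSpace ℝ (Fin n) × EuclideanSpace ℝ (Fin n) =>
      g i z.1 z.2) :
    IsClosed (feasibleGraph K g A B b) := by
  simp only [feasibleGraph, ofPred_and, ofPred_forall]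
  exact (hK.preimage continuous_fst).inter
    ((isClosed_iInter fun i => isClosed_le (hg i) continuous_const).inter
      (isClosed_eq (by fun_prop) continuous_const))

theorem isCompact_feasibleGraph_fiber (hK : IsCompact K)
    (hg : ∀ i, Continuous fun z : EuclideanSpace ℝ (Fin n) × EuclideanSpace ℝ (Fin n) =>
      g i z.1 z.2) (y : EuclideanSpace ℝ (Fin n)) :
    IsCompact {x | (x, y) ∈ feasibleGraph K g A B b} :=
  hK.of_isClosed_subset ((isClosed_feasibleGraph hK.isClosed hg).preimage (by fun_prop))
    fun _ hx => hx.1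

end FeasibleGraph

theorem stmt_9_general
    (n p q T : ℕ)
    (𝒳 : ℕ → Set (EuclideanSpace ℝ (Fin n)))
    (h𝒳 : ∀ t, 1 ≤ t → t ≤ T → (𝒳 t).Nonempty ∧ Convex ℝ (𝒳 t) ∧ IsCompact (𝒳 t))
    (g : ℕ → Fin p → EuclideanSpace ℝ (Fin n) → EuclideanSpace ℝ (Fin n) → EReal)
    (A B : ℕ → Matrix (Fin q) (Fin n) ℝ) (b : ℕ → Fin q → ℝ)
    (X : ℕ → EuclideanSpace ℝ (Fin n) → Set (EuclideanSpace ℝ (Fin n)))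
    (hX : ∀ t y, X t y =
      {x ∈ 𝒳 t | (∀ i, g t i x y ≤ 0) ∧ (A t).mulVec x + (B t).mulVec y = b t})
    -- Assumption (H1)
    (hH1b : ∀ t, 2 ≤ t → t ≤ T →
      𝒳 (t - 1) ⊆ interior {y | (X t y ∩ intrinsicInterior ℝ (𝒳 t)).Nonempty})
    -- fixed stage t and real-valued convex minorants
    (t : ℕ) (ht2 : 2 ≤ t) (htT : t ≤ T)
    (fhat : EuclideanSpace ℝ (Fin n) → EuclideanSpace ℝ (Fin n) → ℝ)
    (hfhatconv : ConvexOn ℝ Set.univ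
      (fun z : EuclideanSpace ℝ (Fin n) × EuclideanSpace ℝ (Fin n) => fhat z.1 z.2))
    (ghat : Fin p → EuclideanSpace ℝ (Fin n) → EuclideanSpace ℝ (Fin n) → ℝ)
    (hghatconv : ∀ i, ConvexOn ℝ Set.univ
      (fun z : EuclideanSpace ℝ (Fin n) × EuclideanSpace ℝ (Fin n) => ghat i z.1 z.2))
    (hghatle : ∀ i x y, ((ghat i x y : ℝ) : EReal) ≤ g t i x y)
    (What : EuclideanSpace ℝ (Fin n) → ℝ)
    (hWhatconv : ConvexOn ℝ Set.univ What)
    -- the approximate value function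
    (Qhat : EuclideanSpace ℝ (Fin n) → EReal)
    (hQhat : ∀ y, Qhat y = sInf ((fun x => ((fhat x y + What x : ℝ) : EReal)) ''
      {x ∈ 𝒳 t | (∀ i, ghat i x y ≤ 0) ∧ (A t).mulVec x + (B t).mulVec y = b t})) :
    ERealConvex Qhat ∧
    𝒳 (t - 1) ⊆ interior {y | Qhat y ≠ ⊤} ∧
    ∀ y ∈ 𝒳 (t - 1), ∃ β : EuclideanSpace ℝ (Fin n),
      ∀ y', Qhat y + ((inner ℝ β (y' - y) : ℝ) : EReal) ≤ Qhat y' := by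
  obtain ⟨-, h𝒳conv, h𝒳cpt⟩ := h𝒳 t (by omega) htT
  have hghatcont (i : Fin p) : Continuous fun z : EuclideanSpace ℝ (Fin n) ×
      EuclideanSpace ℝ (Fin n) => ghat i z.1 z.2 :=
    continuousOn_univ.1 ((hghatconv i).continuousOn isOpen_univ)
  set C := feasibleGraph (𝒳 t) ghat (A t) (B t) (b t)
  set φ : EuclideanSpace ℝ (Fin n) × EuclideanSpace ℝ (Fin n) → ℝ :=
    fun z => fhat z.1 z.2 + What z.1
  have hQhat_eq : Qhat = valueFunction C φ := funext hQhat
  have hφconv : ConvexOn ℝ univ φ :=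
    hfhatconv.add (hWhatconv.comp_linearMap (LinearMap.fst ℝ _ _))
  have hφcont : Continuous φ := continuousOn_univ.1 (hφconv.continuousOn isOpen_univ)
  have hconv : ERealConvex Qhat := hQhat_eq ▸ erealConvex_valueFunction
    (hφconv.subset (subset_univ C) (convex_feasibleGraph h𝒳conv hghatconv))
  have hbot (y) : Qhat y ≠ ⊥ := hQhat_eq ▸ valueFunction_ne_bot
    (isCompact_feasibleGraph_fiber h𝒳cpt hghatcont y) (by fun_prop)
  have hdom : 𝒳 (t - 1) ⊆ interior {y | Qhat y ≠ ⊤} := by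
    refine fun y hy => interior_mono ?_ (hH1b t ht2 htT hy)
    rintro y' ⟨x, hx, -⟩
    rw [hX] at hx
    exact hQhat_eq ▸ valueFunction_ne_top
      ⟨hx.1, fun i => EReal.coe_nonpos.1 ((hghatle i x y').trans (hx.2.1 i)), hx.2.2⟩
  exact ⟨hconv, hdom, fun y hy => hconv.exists_subgradient hbot (hdom hy)⟩

/-- a lower approximate value function `Q̂` built from real-valued convex
minorants `f̂ ≤ f_t`, `ĝᵢ ≤ g_{ti}`, `Ŵ ≤ 𝒬_{t+1}` is convex, has `𝒳_{t−1} ⊆ int(dom Q̂)`,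
and has a nonempty subdifferential at every point of `𝒳_{t−1}`. -/
theorem stmt_9
    (n p q T : ℕ) (hn : 1 ≤ n) (hp : 1 ≤ p) (hq : 1 ≤ q) (hT : 1 ≤ T)
    (x₀ : EuclideanSpace ℝ (Fin n))
    (𝒳 : ℕ → Set (EuclideanSpace ℝ (Fin n)))
    (h𝒳₀ : 𝒳 0 = {x₀})
    (h𝒳 : ∀ t, 1 ≤ t → t ≤ T → (𝒳 t).Nonempty ∧ Convex ℝ (𝒳 t) ∧ IsCompact (𝒳 t))
    (f : ℕ → EuclideanSpace ℝ (Fin n) → EuclideanSpace ℝ (Fin n) → EReal)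
    (hf : ∀ t, 1 ≤ t → t ≤ T →
      ERealProper (fun z : EuclideanSpace ℝ (Fin n) × EuclideanSpace ℝ (Fin n) => f t z.1 z.2) ∧
      LowerSemicontinuous
        (fun z : EuclideanSpace ℝ (Fin n) × EuclideanSpace ℝ (Fin n) => f t z.1 z.2) ∧
      ERealConvex
        (fun z : EuclideanSpace ℝ (Fin n) × EuclideanSpace ℝ (Fin n) => f t z.1 z.2) ∧
      (𝒳 t ×ˢ 𝒳 (t - 1)) ⊆ interior {z : EuclideanSpace ℝ (Fin n) × EuclideanSpace ℝ (Fin n) |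
        f t z.1 z.2 ≠ ⊤})
    (g : ℕ → Fin p → EuclideanSpace ℝ (Fin n) → EuclideanSpace ℝ (Fin n) → EReal)
    (hg : ∀ t, 1 ≤ t → t ≤ T → ∀ i,
      ERealProper (fun z : EuclideanSpace ℝ (Fin n) × EuclideanSpace ℝ (Fin n) => g t i z.1 z.2) ∧
      LowerSemicontinuous
        (fun z : EuclideanSpace ℝ (Fin n) × EuclideanSpace ℝ (Fin n) => g t i z.1 z.2) ∧
      ERealConvex
        (fun z : EuclideanSpace ℝ (Fin n) × EuclideanSpace ℝ (Fin n) => g t i z.1 z.2) ∧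
      (𝒳 t ×ˢ 𝒳 (t - 1)) ⊆ interior {z : EuclideanSpace ℝ (Fin n) × EuclideanSpace ℝ (Fin n) |
        g t i z.1 z.2 ≠ ⊤})
    (A B : ℕ → Matrix (Fin q) (Fin n) ℝ) (b : ℕ → Fin q → ℝ)
    (X : ℕ → EuclideanSpace ℝ (Fin n) → Set (EuclideanSpace ℝ (Fin n)))
    (hX : ∀ t y, X t y =
      {x ∈ 𝒳 t | (∀ i, g t i x y ≤ 0) ∧ (A t).mulVec x + (B t).mulVec y = b t})
    -- Assumption (H1)
    (hH1a : (X 1 x₀).Nonempty)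
    (hH1b : ∀ t, 2 ≤ t → t ≤ T →
      𝒳 (t - 1) ⊆ interior {y | (X t y ∩ intrinsicInterior ℝ (𝒳 t)).Nonempty})
    -- the cost-to-go functions
    (Q : ℕ → EuclideanSpace ℝ (Fin n) → EReal)
    (hQT : ∀ y, Q (T + 1) y = 0)
    (hQ : ∀ t, 1 ≤ t → t ≤ T → ∀ y,
      Q t y = sInf ((fun x => f t x y + Q (t + 1) x) '' X t y))
    -- fixed stage t and real-valued convex minorants
    (t : ℕ) (ht2 : 2 ≤ t) (htT : t ≤ T)
    (fhat : EuclideanSpace ℝ (Fin n) → EuclideanSpace ℝ (Fin n) → ℝ)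
    (hfhatconv : ConvexOn ℝ Set.univ
      (fun z : EuclideanSpace ℝ (Fin n) × EuclideanSpace ℝ (Fin n) => fhat z.1 z.2))
    (hfhatle : ∀ x y, ((fhat x y : ℝ) : EReal) ≤ f t x y)
    (ghat : Fin p → EuclideanSpace ℝ (Fin n) → EuclideanSpace ℝ (Fin n) → ℝ)
    (hghatconv : ∀ i, ConvexOn ℝ Set.univ
      (fun z : EuclideanSpace ℝ (Fin n) × EuclideanSpace ℝ (Fin n) => ghat i z.1 z.2))
    (hghatle : ∀ i x y, ((ghat i x y : ℝ) : EReal) ≤ g t i x y)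
    (What : EuclideanSpace ℝ (Fin n) → ℝ)
    (hWhatconv : ConvexOn ℝ Set.univ What)
    (hWhatle : ∀ x, ((What x : ℝ) : EReal) ≤ Q (t + 1) x)
    -- the approximate value function
    (Qhat : EuclideanSpace ℝ (Fin n) → EReal)
    (hQhat : ∀ y, Qhat y = sInf ((fun x => ((fhat x y + What x : ℝ) : EReal)) ''
      {x ∈ 𝒳 t | (∀ i, ghat i x y ≤ 0) ∧ (A t).mulVec x + (B t).mulVec y = b t})) :
    ERealConvex Qhat ∧
    𝒳 (t - 1) ⊆ interior {y | Qhat y ≠ ⊤} ∧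
    ∀ y ∈ 𝒳 (t - 1), ∃ β : EuclideanSpace ℝ (Fin n),
      ∀ y', Qhat y + ((inner ℝ β (y' - y) : ℝ) : EReal) ≤ Qhat y' :=
  stmt_9_general n p q T 𝒳 h𝒳 g A B b X hX hH1b t ht2 htT fhat hfhatconv ghat hghatconv hghatle What
    hWhatconv Qhat hQhat
end
end

section
/- The random variables (y_{τ_j})_{j≥1} are mutually independent and each has the same distribution as y_1; consequently, by the strong law of large numbers, almost surely lim_{N→∞} (1/N) Σ_{j=1}^{N} y_{τ_j} = E[y_1]. -/
/-!
Condition on the value `k` of the `m`-th hitting time. The event that the earlier sampled values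
`y_{τ_j}`, `j < m`, lie in given sets, intersected with `{τ_m = k}`, is determined up to a null set
by `y_1, …, y_{k-1}, w_1, …, w_k`, so by (ii) it is independent of `y_k`, whose law is that of
`y_1`. Summing over `k` and inducting on the largest index gives the product formula for finitely
many `y_{τ_j}` (Doob's optional skipping theorem), and the strong law of large numbers applies to
the resulting i.i.d. sequence. The hitting times are stopping times only off the null event where
`w` hits `1` finitely often, which is why measurability is taken modulo `P`-null sets.
-/

open MeasureTheory ProbabilityTheory Filter Topology

section AECompletion

variable {Ω : Type*} {mΩ : MeasurableSpace Ω} {P : Measure Ω}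

@[reducible] def aeCompletion (P : Measure Ω) (m : MeasurableSpace Ω) : MeasurableSpace Ω where
  MeasurableSet' s := ∃ t, MeasurableSet[m] t ∧ s =ᵐ[P] t
  measurableSet_empty := ⟨∅, MeasurableSet.empty, EventuallyEq.rfl⟩
  measurableSet_compl _ := fun ⟨t, ht, hst⟩ => ⟨tᶜ, ht.compl, hst.compl⟩
  measurableSet_iUnion _ hs := by
    choose t ht hst using hs
    exact ⟨⋃ i, t i, MeasurableSet.iUnion ht, Filter.EventuallyEq.countable_iUnion hst⟩

lemma le_aeCompletion (m : MeasurableSpace Ω) : m ≤ aeCompletion P m :=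
  fun s hs => ⟨s, hs, EventuallyEq.rfl⟩

lemma aeCompletion_mono {m₁ m₂ : MeasurableSpace Ω} (hm : m₁ ≤ m₂) :
    aeCompletion P m₁ ≤ aeCompletion P m₂ :=
  fun _ ⟨t, ht, hst⟩ => ⟨t, hm t ht, hst⟩

lemma MeasurableSet.congr_aeCompletion {m : MeasurableSpace Ω} {s t : Set Ω}
    (hs : MeasurableSet[aeCompletion P m] s) (hst : s =ᵐ[P] t) :
    MeasurableSet[aeCompletion P m] t :=
  let ⟨u, hu, hsu⟩ := hs
  ⟨u, hu, hst.symm.trans hsu⟩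

lemma measurableSet_aeCompletion_of_measure_eq_zero (m : MeasurableSpace Ω) {s : Set Ω}
    (hs : P s = 0) : MeasurableSet[aeCompletion P m] s :=
  ⟨∅, MeasurableSet.empty, ae_eq_empty.2 hs⟩

lemma nullMeasurableSet_of_measurableSet_aeCompletion {s : Set Ω}
    (hs : MeasurableSet[aeCompletion P mΩ] s) : NullMeasurableSet s P :=
  hs

lemma ProbabilityTheory.Indep.aeCompletion_right {m₁ m₂ : MeasurableSpace Ω}
    (h : Indep m₁ m₂ P) : Indep m₁ (aeCompletion P m₂) P := by
  rw [Indep_iff] at h ⊢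
  rintro s t hs ⟨t', ht', htt'⟩
  rw [measure_congr (EventuallyEq.rfl.inter htt'), measure_congr htt', h s t' hs ht']

end AECompletion

lemma measure_eq_tsum_measure_inter_fiber {Ω : Type*} {mΩ : MeasurableSpace Ω}
    {P : Measure Ω} {τ : Ω → ℕ} (hτ : ∀ k, NullMeasurableSet {ω | τ ω = k} P) (E : Set Ω) :
    P E = ∑' k, P (E ∩ {ω | τ ω = k}) := by
  have hcover : (⋃ k, {ω | τ ω = k}) = Set.univ := Set.iUnion_eq_univ_iff.2 fun ω => ⟨τ ω, rfl⟩
  calc P E = P.restrict E (⋃ k, {ω | τ ω = k}) := by rw [hcover, Measure.restrict_apply_univ]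
    _ = ∑' k, P.restrict E {ω | τ ω = k} :=
      measure_iUnion₀ (fun k l hkl => (Set.disjoint_left.2 fun ω hk hl => hkl
        (hk.symm.trans hl)).aedisjoint) fun k => (hτ k).mono Measure.restrict_le_self
    _ = ∑' k, P (E ∩ {ω | τ ω = k}) := by
      congr 1 with k
      rw [Measure.restrict_apply₀ ((hτ k).mono Measure.restrict_le_self), Set.inter_comm]

lemma aemeasurable_comp_of_nullMeasurableSet_fiber {Ω β : Type*} {mΩ : MeasurableSpace Ω}
    [MeasurableSpace β] {P : Measure Ω} {X : ℕ → Ω → β} (hX : ∀ k, Measurable (X k))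
    {τ : Ω → ℕ} (hτ : ∀ k, NullMeasurableSet {ω | τ ω = k} P) :
    AEMeasurable (fun ω => X (τ ω) ω) P := by
  have hτ' : AEMeasurable τ P := NullMeasurable.aemeasurable (measurable_to_countable' hτ)
  exact (measurable_from_prod_countable_left (f := fun p : Ω × ℕ => X p.2 p.1) hX)
    |>.comp_aemeasurable (aemeasurable_id.prodMk hτ')

section OptionalSkipping

variable {Ω β ι : Type*} {mΩ : MeasurableSpace Ω} [mβ : MeasurableSpace β] {P : Measure Ω}
  {X : ℕ → Ω → β}

theorem measure_preimage_comp_inter_eq_mul {ℱ : ℕ → MeasurableSpace Ω}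
    (hindep : ∀ k, Indep (mβ.comap (X k)) (ℱ k) P) (hident : ∀ k, IdentDistrib (X k) (X 0) P P)
    {τ : Ω → ℕ} (hτ : ∀ k, NullMeasurableSet {ω | τ ω = k} P) {E : Set Ω}
    (hE : ∀ k, MeasurableSet[aeCompletion P (ℱ k)] (E ∩ {ω | τ ω = k}))
    {A : Set β} (hA : MeasurableSet A) :
    P ((fun ω => X (τ ω) ω) ⁻¹' A ∩ E) = P (X 0 ⁻¹' A) * P E := by
  have hfiber : ∀ k, (fun ω => X (τ ω) ω) ⁻¹' A ∩ E ∩ {ω | τ ω = k} =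
      X k ⁻¹' A ∩ (E ∩ {ω | τ ω = k}) := by
    intro k
    ext ω
    simp only [Set.mem_inter_iff, Set.mem_preimage, Set.mem_ofPred_eq]
    constructor
    · rintro ⟨⟨hX, hE⟩, rfl⟩
      exact ⟨hX, hE, rfl⟩
    · rintro ⟨hX, hE, rfl⟩
      exact ⟨⟨hX, hE⟩, rfl⟩
  calc P ((fun ω => X (τ ω) ω) ⁻¹' A ∩ E)
      = ∑' k, P (X k ⁻¹' A ∩ (E ∩ {ω | τ ω = k})) := by
        rw [measure_eq_tsum_measure_inter_fiber hτ]
        simp_rw [hfiber]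
    _ = ∑' k, P (X 0 ⁻¹' A) * P (E ∩ {ω | τ ω = k}) := by
        congr 1 with k
        rw [(Indep_iff _ _ P).1 (hindep k).aeCompletion_right _ _ ⟨A, hA, rfl⟩ (hE k),
          (hident k).measure_mem_eq hA]
    _ = P (X 0 ⁻¹' A) * P E := by
        rw [ENNReal.tsum_mul_left, ← measure_eq_tsum_measure_inter_fiber hτ]

variable (ℱ : Filtration ℕ mΩ) (hX : ∀ k, Measurable[ℱ (k + 1)] (X k))
  (hindep : ∀ k, Indep (mβ.comap (X k)) (ℱ k) P) (hident : ∀ k, IdentDistrib (X k) (X 0) P P)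
  {τ : ι → Ω → ℕ} (hτ : ∀ i k, MeasurableSet[aeCompletion P (ℱ k)] {ω | τ i ω = k})

include hτ in
lemma nullMeasurableSet_fiber (i : ι) (k : ℕ) : NullMeasurableSet {ω | τ i ω = k} P :=
  nullMeasurableSet_of_measurableSet_aeCompletion (aeCompletion_mono (ℱ.le k) _ (hτ i k))

include hX hτ in
lemma measurableSet_preimage_comp_inter_lt (i : ι) {A : Set β} (hA : MeasurableSet A) (k : ℕ) :
    MeasurableSet[aeCompletion P (ℱ k)] ((fun ω => X (τ i ω) ω) ⁻¹' A ∩ {ω | τ i ω < k}) := by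
  have hunion : (fun ω => X (τ i ω) ω) ⁻¹' A ∩ {ω | τ i ω < k} =
      ⋃ l ∈ Finset.range k, {ω | τ i ω = l} ∩ X l ⁻¹' A := by
    ext ω
    simp only [Set.mem_inter_iff, Set.mem_preimage, Set.mem_ofPred_eq, Set.mem_iUnion,
      Finset.mem_range, exists_prop]
    constructor
    · rintro ⟨hX, hlt⟩
      exact ⟨_, hlt, rfl, hX⟩
    · rintro ⟨l, hlt, rfl, hX⟩
      exact ⟨hX, hlt⟩
  rw [hunion]
  refine Finset.measurableSet_biUnion _ fun l hl => ?_
  have hlk : l + 1 ≤ k := Finset.mem_range.1 hl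
  exact (aeCompletion_mono (ℱ.mono (by omega)) _ (hτ i l)).inter
    (le_aeCompletion _ _ (ℱ.mono hlk _ (hX l hA)))

include hX hindep hident hτ in
theorem identDistrib_optionalSkipping [IsProbabilityMeasure P] (i : ι) :
    IdentDistrib (fun ω => X (τ i ω) ω) (X 0) P P where
  aemeasurable_fst := aemeasurable_comp_of_nullMeasurableSet_fiber
    (fun k => (hX k).mono (ℱ.le _) le_rfl) (nullMeasurableSet_fiber ℱ hτ i)
  aemeasurable_snd := ((hX 0).mono (ℱ.le _) le_rfl).aemeasurable
  map_eq := by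
    ext A hA
    rw [Measure.map_apply_of_aemeasurable (aemeasurable_comp_of_nullMeasurableSet_fiber
      (fun k => (hX k).mono (ℱ.le _) le_rfl) (nullMeasurableSet_fiber ℱ hτ i)) hA,
      Measure.map_apply ((hX 0).mono (ℱ.le _) le_rfl) hA]
    simpa using measure_preimage_comp_inter_eq_mul hindep hident
      (nullMeasurableSet_fiber ℱ hτ i) (E := Set.univ) (by simpa using hτ i) hA

variable [LinearOrder ι]

include hX hindep hident hτ in
theorem measure_biInter_preimage_comp_eq_prod [IsProbabilityMeasure P]
    (hmono : ∀ᵐ ω ∂P, StrictMono fun i => τ i ω)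
    (S : Finset ι) {A : ι → Set β} (hA : ∀ i ∈ S, MeasurableSet (A i)) :
    P (⋂ i ∈ S, (fun ω => X (τ i ω) ω) ⁻¹' A i) = ∏ i ∈ S, P (X 0 ⁻¹' A i) := by
  classical
  induction S using Finset.induction_on_max with
  | empty => simp
  | insert m S hlt ih =>
    have hmS : m ∉ S := fun h => lt_irrefl m (hlt m h)
    -- The indices in `S` are sampled strictly before `τ m`, so this event is known at time `τ m`.
    have hpast : ∀ k, MeasurableSet[aeCompletion P (ℱ k)]
        ((⋂ i ∈ S, (fun ω => X (τ i ω) ω) ⁻¹' A i) ∩ {ω | τ m ω = k}) := by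
      intro k
      refine MeasurableSet.congr_aeCompletion ((MeasurableSet.biInter S.countable_toSet
        fun i hi => measurableSet_preimage_comp_inter_lt ℱ hX hτ i
          (hA i (Finset.mem_insert_of_mem hi)) k).inter (hτ m k)) (eventuallyEq_set.2 ?_)
      filter_upwards [hmono] with ω hω
      simp only [Set.mem_inter_iff, Set.mem_iInter, Set.mem_preimage, Set.mem_ofPred_eq]
      constructor
      · rintro ⟨h, hk⟩
        exact ⟨fun i hi => (h i hi).1, hk⟩
      · rintro ⟨h, rfl⟩
        exact ⟨fun i hi => ⟨h i hi, hω (hlt i hi)⟩, rfl⟩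
    rw [Finset.set_biInter_insert, Finset.prod_insert hmS,
      measure_preimage_comp_inter_eq_mul hindep hident (nullMeasurableSet_fiber ℱ hτ m) hpast
        (hA m (Finset.mem_insert_self m S)), ih fun i hi => hA i (Finset.mem_insert_of_mem hi)]

include hX hindep hident hτ in
theorem iIndepFun_optionalSkipping [IsProbabilityMeasure P]
    (hmono : ∀ᵐ ω ∂P, StrictMono fun i => τ i ω) :
    iIndepFun (fun i ω => X (τ i ω) ω) P := by
  rw [iIndepFun_iff_measure_inter_preimage_eq_mul]
  intro S A hA
  rw [measure_biInter_preimage_comp_eq_prod ℱ hX hindep hident hτ hmono S hA]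
  exact Finset.prod_congr rfl fun i hi =>
    ((identDistrib_optionalSkipping ℱ hX hindep hident hτ i).measure_mem_eq (hA i hi)).symm

end OptionalSkipping

section HittingTimes

theorem Nat.sInf_setOf_lt_and_eq_iff {p : ℕ → Prop} {t k : ℕ} (hk : k ≠ 0) :
    sInf {i | t < i ∧ p i} = k ↔ t < k ∧ p k ∧ ∀ i, t < i → i < k → ¬ p i := by
  constructor
  · intro h
    have hne : {i | t < i ∧ p i}.Nonempty := by
      by_contra hne
      rw [Set.not_nonempty_iff_eq_empty.1 hne, Nat.sInf_empty] at h
      exact hk h.symm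
    obtain ⟨htk, hpk⟩ := h ▸ Nat.sInf_mem hne
    exact ⟨htk, hpk, fun i hti hik hpi =>
      Nat.notMem_of_lt_sInf (s := {i | t < i ∧ p i}) (h ▸ hik) ⟨hti, hpi⟩⟩
  · rintro ⟨htk, hpk, hmin⟩
    exact IsLeast.csInf_eq ⟨⟨htk, hpk⟩, fun i ⟨hti, hpi⟩ => not_lt.1 fun hik => hmin i hti hik hpi⟩

variable {Ω : Type*} {mΩ : MeasurableSpace Ω} {P : Measure Ω} {p : ℕ → Ω → Prop}
  {τ : ℕ → Ω → ℕ} (hτ1 : ∀ ω, τ 1 ω = sInf {k | 1 ≤ k ∧ p k ω})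
  (hτs : ∀ j, 1 ≤ j → ∀ ω, τ (j + 1) ω = sInf {k | τ j ω < k ∧ p k ω})

include hτ1 hτs in
theorem hittingTime_pos_and_lt_succ {ω : Ω} (hω : {k | 1 ≤ k ∧ p k ω}.Infinite) {j : ℕ}
    (hj : 1 ≤ j) : 0 < τ j ω ∧ τ j ω < τ (j + 1) ω := by
  have hafter : ∀ t, t < sInf {k | t < k ∧ p k ω} := by
    intro t
    obtain ⟨k, ⟨_, hk⟩, htk⟩ := hω.exists_gt t
    exact (Nat.sInf_mem (s := {k | t < k ∧ p k ω}) ⟨k, htk, hk⟩).1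
  refine ⟨?_, hτs j hj ω ▸ hafter _⟩
  induction j, hj using Nat.le_induction with
  | base => exact hτ1 ω ▸ hafter 0
  | succ j hj ih => exact ih.trans (hτs j hj ω ▸ hafter _)

include hτ1 hτs in
theorem hittingTime_lt_of_lt {ω : Ω} (hω : {k | 1 ≤ k ∧ p k ω}.Infinite) {i j : ℕ} (hi : 1 ≤ i)
    (hij : i < j) : τ i ω < τ j ω := by
  induction j, hij using Nat.le_induction with
  | base => exact (hittingTime_pos_and_lt_succ hτ1 hτs hω hi).2
  | succ j hij ih => exact ih.trans (hittingTime_pos_and_lt_succ hτ1 hτs hω (by omega)).2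

variable (hinf : ∀ᵐ ω ∂P, {k | 1 ≤ k ∧ p k ω}.Infinite)

include hτ1 hτs hinf in
theorem ae_hittingTime_pos {j : ℕ} (hj : 1 ≤ j) : ∀ᵐ ω ∂P, 0 < τ j ω :=
  hinf.mono fun _ hω => (hittingTime_pos_and_lt_succ hτ1 hτs hω hj).1

include hτ1 hτs hinf in
theorem ae_strictMono_hittingTime_sub_one :
    ∀ᵐ ω ∂P, StrictMono fun j : {j : ℕ // 1 ≤ j} => τ j ω - 1 :=
  hinf.mono fun ω hω i j hij => by
    have hlt := hittingTime_lt_of_lt hτ1 hτs hω i.2 hij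
    have hpos := (hittingTime_pos_and_lt_succ hτ1 hτs hω i.2).1
    dsimp only
    omega

theorem measurableSet_firstHitAfter {𝒢 : ℕ → MeasurableSpace Ω} (h𝒢 : Monotone 𝒢)
    (hp : ∀ k, 1 ≤ k → MeasurableSet[𝒢 k] {ω | p k ω}) (t : ℕ) {k : ℕ} (hk : 1 ≤ k) :
    MeasurableSet[𝒢 k] {ω | t < k ∧ p k ω ∧ ∀ i, t < i → i < k → ¬ p i ω} := by
  have hset : {ω | t < k ∧ p k ω ∧ ∀ i, t < i → i < k → ¬ p i ω} =
      {_ω | t < k} ∩ ({ω | p k ω} ∩ ⋂ i, ⋂ (_ : t < i), ⋂ (_ : i < k), {ω | p i ω}ᶜ) := by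
    ext ω
    simp
  rw [hset]
  exact (MeasurableSet.const _).inter ((hp k hk).inter (MeasurableSet.iInter fun i =>
    MeasurableSet.iInter fun hti => MeasurableSet.iInter fun hik =>
      (h𝒢 hik.le _ (hp i (by omega))).compl))

variable {𝒢 : ℕ → MeasurableSpace Ω} (h𝒢 : Monotone 𝒢)
  (hp : ∀ k, 1 ≤ k → MeasurableSet[𝒢 k] {ω | p k ω})

include hτ1 hτs hinf h𝒢 hp in
theorem measurableSet_aeCompletion_hittingTime_eq {j : ℕ} (hj : 1 ≤ j) (k : ℕ) :
    MeasurableSet[aeCompletion P (𝒢 k)] {ω | τ j ω = k} := by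
  have hzero : ∀ j, 1 ≤ j → MeasurableSet[aeCompletion P (𝒢 0)] {ω | τ j ω = 0} := by
    intro j hj
    refine measurableSet_aeCompletion_of_measure_eq_zero _
      (measure_mono_null (fun ω h => ?_) (ae_iff.1 (ae_hittingTime_pos hτ1 hτs hinf hj)))
    simp_all
  induction j, hj using Nat.le_induction generalizing k with
  | base =>
    rcases Nat.eq_zero_or_pos k with rfl | hk
    · exact hzero 1 le_rfl
    have hset : {ω | τ 1 ω = k} = {ω | 0 < k ∧ p k ω ∧ ∀ i, 0 < i → i < k → ¬ p i ω} := by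
      ext ω
      show τ 1 ω = k ↔ _
      rw [hτ1 ω]
      exact Nat.sInf_setOf_lt_and_eq_iff hk.ne'
    rw [hset]
    exact le_aeCompletion _ _ (measurableSet_firstHitAfter h𝒢 hp 0 hk)
  | succ j hj ih =>
    rcases Nat.eq_zero_or_pos k with rfl | hk
    · exact hzero (j + 1) (by omega)
    have hset : {ω | τ (j + 1) ω = k} =
        ⋃ t < k, {ω | τ j ω = t} ∩ {ω | t < k ∧ p k ω ∧ ∀ i, t < i → i < k → ¬ p i ω} := by
      ext ω
      simp only [Set.mem_ofPred_eq, hτs j hj ω, Nat.sInf_setOf_lt_and_eq_iff hk.ne',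
        Set.mem_iUnion, Set.mem_inter_iff, exists_prop]
      exact ⟨fun h => ⟨_, h.1, rfl, h⟩, fun ⟨_, _, rfl, h⟩ => h⟩
    rw [hset]
    exact MeasurableSet.iUnion fun t => MeasurableSet.iUnion fun htk =>
      (aeCompletion_mono (h𝒢 htk.le) _ (ih t)).inter
        (le_aeCompletion _ _ (measurableSet_firstHitAfter h𝒢 hp t hk))

include hτ1 hτs hinf h𝒢 hp in
theorem measurableSet_aeCompletion_hittingTime_sub_one_eq {j : ℕ} (hj : 1 ≤ j) (k : ℕ) :
    MeasurableSet[aeCompletion P (𝒢 (k + 1))] {ω | τ j ω - 1 = k} := by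
  refine (measurableSet_aeCompletion_hittingTime_eq hτ1 hτs hinf h𝒢 hp hj (k + 1))
    |>.congr_aeCompletion (eventuallyEq_set.2 ?_)
  filter_upwards [ae_hittingTime_pos hτ1 hτs hinf hj] with ω hω
  omega

end HittingTimes

section PastSigmaAlgebras

variable {Ω β γ : Type*} {mΩ : MeasurableSpace Ω} [mβ : MeasurableSpace β]
  [mγ : MeasurableSpace γ]

@[reducible] def sigmaUpTo (y : ℕ → Ω → β) (n : ℕ) : MeasurableSpace Ω :=
  ⨆ i ∈ Set.Icc 1 n, mβ.comap (y i)

lemma sigmaUpTo_mono (y : ℕ → Ω → β) : Monotone (sigmaUpTo y) :=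
  fun _ _ hmn => biSup_mono fun _ hi => ⟨hi.1, hi.2.trans hmn⟩

lemma measurable_sigmaUpTo {y : ℕ → Ω → β} {i n : ℕ} (hi : 1 ≤ i) (hin : i ≤ n) :
    Measurable[sigmaUpTo y n] (y i) :=
  measurable_iff_comap_le.2 (le_iSup₂_of_le i ⟨hi, hin⟩ le_rfl)

lemma sigmaUpTo_le {y : ℕ → Ω → β} (hy : ∀ k, Measurable (y k)) (n : ℕ) :
    sigmaUpTo y n ≤ mΩ :=
  iSup₂_le fun i _ => (hy i).comap_le

/-- `σ(y₁, …, y_k, w₁, …, w_{k+1})`, the information available when `y_{k+1}` is drawn. -/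
def pastFiltration (y : ℕ → Ω → β) (w : ℕ → Ω → γ) (hy : ∀ k, Measurable (y k))
    (hw : ∀ k, Measurable (w k)) : Filtration ℕ mΩ where
  seq k := sigmaUpTo y k ⊔ sigmaUpTo w (k + 1)
  mono' _ _ hkl := sup_le_sup (sigmaUpTo_mono y hkl) (sigmaUpTo_mono w (by omega))
  le' k := sup_le (sigmaUpTo_le hy k) (sigmaUpTo_le hw (k + 1))

lemma measurable_pastFiltration_succ {y : ℕ → Ω → β} {w : ℕ → Ω → γ}
    (hy : ∀ k, Measurable (y k)) (hw : ∀ k, Measurable (w k)) (k : ℕ) :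
    Measurable[pastFiltration y w hy hw (k + 1)] (y (k + 1)) :=
  (measurable_sigmaUpTo (by omega) le_rfl).mono le_sup_left le_rfl

end PastSigmaAlgebras

theorem strong_law_ae_real_Icc {Ω : Type*} {mΩ : MeasurableSpace Ω} {P : Measure Ω}
    {Z : ℕ → Ω → ℝ} {Y : Ω → ℝ} (hindep : iIndepFun (fun j : {j : ℕ // 1 ≤ j} => Z j) P)
    (hident : ∀ j, 1 ≤ j → IdentDistrib (Z j) Y P P) (hint : Integrable Y P) :
    ∀ᵐ ω ∂P, Tendsto (fun N : ℕ => (∑ j ∈ Finset.Icc 1 N, Z j ω) / N) atTop (𝓝 P[Y]) := by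
  have hsum : ∀ N ω, ∑ j ∈ Finset.Icc 1 N, Z j ω = ∑ n ∈ Finset.range N, Z (n + 1) ω := by
    intro N ω
    induction N with
    | zero => simp
    | succ N ih => rw [Finset.sum_Icc_succ_top (by omega), ih, Finset.sum_range_succ]
  simp only [hsum]
  rw [← (hident 1 le_rfl).integral_eq]
  exact strong_law_ae_real (fun n => Z (n + 1)) ((hident 1 le_rfl).integrable_iff.2 hint)
    (fun m n hmn => hindep.indepFun (i := ⟨m + 1, by omega⟩) (j := ⟨n + 1, by omega⟩)
      (by simpa using hmn))
    fun n => (hident (n + 1) (by omega)).trans (hident 1 le_rfl).symm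

theorem stmt_15_general
    {Ω : Type*} [MeasurableSpace Ω] (P : Measure Ω) [IsProbabilityMeasure P]
    (y w : ℕ → Ω → ℝ)
    (hy01 : ∀ k ω, y k ω = 0 ∨ y k ω = 1)
    (hymeas : ∀ k, Measurable (y k)) (hwmeas : ∀ k, Measurable (w k))
    -- (i) all y_k have the same distribution
    (hid : ∀ k, 1 ≤ k → IdentDistrib (y k) (y 1) P P)
    -- (ii) y_k is independent of σ({y_1,…,y_{k−1}} ∪ {w_1,…,w_k})
    (hindep : ∀ k, 1 ≤ k → Indep
      (MeasurableSpace.comap (y k) inferInstance)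
      ((⨆ i ∈ Set.Icc 1 (k - 1), MeasurableSpace.comap (y i) inferInstance) ⊔
        (⨆ i ∈ Set.Icc 1 k, MeasurableSpace.comap (w i) inferInstance)) P)
    -- (iii) almost surely w_k = 1 infinitely often
    (hinf : ∀ᵐ ω ∂P, {k : ℕ | 1 ≤ k ∧ w k ω = 1}.Infinite)
    -- the hitting times
    (τ : ℕ → Ω → ℕ)
    (hτ1 : ∀ ω, τ 1 ω = sInf {k : ℕ | 1 ≤ k ∧ w k ω = 1})
    (hτs : ∀ j, 1 ≤ j → ∀ ω, τ (j + 1) ω = sInf {k : ℕ | τ j ω < k ∧ w k ω = 1}) :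
    -- conclusions: mutual independence, identical distribution, and the SLLN limit
    iIndepFun
      (fun j : {j : ℕ // 1 ≤ j} => fun ω => y (τ j.1 ω) ω) P ∧
    (∀ j, 1 ≤ j → IdentDistrib (fun ω => y (τ j ω) ω) (y 1) P P) ∧
    ∀ᵐ ω ∂P, Tendsto (fun N : ℕ => (∑ j ∈ Finset.Icc 1 N, y (τ j ω) ω) / (N : ℝ))
      atTop (𝓝 (∫ ω, y 1 ω ∂P)) := by
  set ℱ := pastFiltration y w hymeas hwmeas
  -- Shift indices by one: `y (k + 1)` is independent of `ℱ k`, and `y_{τ_j} = y (k + 1)`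
  -- for `k = τ_j - 1`, which is a.s. well defined since `τ_j ≥ 1` a.s.
  have hτ' : ∀ (j : {j : ℕ // 1 ≤ j}) k, MeasurableSet[aeCompletion P (ℱ k)] {ω | τ j ω - 1 = k} :=
    fun j k => aeCompletion_mono le_sup_right _ (measurableSet_aeCompletion_hittingTime_sub_one_eq
      hτ1 hτs hinf (sigmaUpTo_mono w)
      (fun k hk => measurable_sigmaUpTo hk le_rfl (measurableSet_singleton 1)) j.2 k)
  have hindep' : ∀ k, Indep (MeasurableSpace.comap (y (k + 1)) inferInstance) (ℱ k) P :=
    fun k => hindep (k + 1) (by omega)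
  have hident' : ∀ k, IdentDistrib (y (k + 1)) (y 1) P P := fun k => hid (k + 1) (by omega)
  have hshift : ∀ j : {j // 1 ≤ j}, (fun ω => y (τ j ω - 1 + 1) ω) =ᵐ[P] fun ω => y (τ j ω) ω :=
    fun j => (ae_hittingTime_pos hτ1 hτs hinf j.2).mono fun ω hω => by
      simp only [Nat.sub_add_cancel hω]
  have hidentZ : ∀ j, 1 ≤ j → IdentDistrib (fun ω => y (τ j ω) ω) (y 1) P P := fun j hj =>
    have hY := identDistrib_optionalSkipping ℱ (X := fun k => y (k + 1))
      (measurable_pastFiltration_succ hymeas hwmeas) hindep' hident' hτ' ⟨j, hj⟩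
    (IdentDistrib.of_ae_eq hY.aemeasurable_fst (hshift ⟨j, hj⟩)).symm.trans hY
  have hindepZ : iIndepFun (fun j : {j : ℕ // 1 ≤ j} => fun ω => y (τ j.1 ω) ω) P :=
    (iIndepFun_congr hshift).1 (iIndepFun_optionalSkipping ℱ (X := fun k => y (k + 1))
      (measurable_pastFiltration_succ hymeas hwmeas) hindep' hident' hτ'
      (ae_strictMono_hittingTime_sub_one hτ1 hτs hinf))
  refine ⟨hindepZ, hidentZ, strong_law_ae_real_Icc hindepZ hidentZ ?_⟩
  exact Integrable.of_bound (hymeas 1).aestronglyMeasurable 1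
    (ae_of_all _ fun ω => by rcases hy01 1 ω with h | h <;> simp [h])

/-- the values `y_{τ_j}` of a sequence of {0,1}-valued random variables sampled
at the successive hitting times `τ_j` of the events `{w_k = 1}` are i.i.d. with the
distribution of `y_1`; hence by the strong law of large numbers their averages converge
almost surely to `E[y_1]`. -/
theorem stmt_15
    {Ω : Type*} [MeasurableSpace Ω] (P : Measure Ω) [IsProbabilityMeasure P]
    (y w : ℕ → Ω → ℝ)
    (hy01 : ∀ k ω, y k ω = 0 ∨ y k ω = 1)
    (hw01 : ∀ k ω, w k ω = 0 ∨ w k ω = 1)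
    (hymeas : ∀ k, Measurable (y k)) (hwmeas : ∀ k, Measurable (w k))
    -- (i) all y_k have the same distribution
    (hid : ∀ k, 1 ≤ k → IdentDistrib (y k) (y 1) P P)
    -- (ii) y_k is independent of σ({y_1,…,y_{k−1}} ∪ {w_1,…,w_k})
    (hindep : ∀ k, 1 ≤ k → Indep
      (MeasurableSpace.comap (y k) inferInstance)
      ((⨆ i ∈ Set.Icc 1 (k - 1), MeasurableSpace.comap (y i) inferInstance) ⊔
        (⨆ i ∈ Set.Icc 1 k, MeasurableSpace.comap (w i) inferInstance)) P)
    -- (iii) almost surely w_k = 1 infinitely often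
    (hinf : ∀ᵐ ω ∂P, {k : ℕ | 1 ≤ k ∧ w k ω = 1}.Infinite)
    -- the hitting times
    (τ : ℕ → Ω → ℕ)
    (hτ1 : ∀ ω, τ 1 ω = sInf {k : ℕ | 1 ≤ k ∧ w k ω = 1})
    (hτs : ∀ j, 1 ≤ j → ∀ ω, τ (j + 1) ω = sInf {k : ℕ | τ j ω < k ∧ w k ω = 1}) :
    -- conclusions: mutual independence, identical distribution, and the SLLN limit
    iIndepFun
      (fun j : {j : ℕ // 1 ≤ j} => fun ω => y (τ j.1 ω) ω) P ∧
    (∀ j, 1 ≤ j → IdentDistrib (fun ω => y (τ j ω) ω) (y 1) P P) ∧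
    ∀ᵐ ω ∂P, Tendsto (fun N : ℕ => (∑ j ∈ Finset.Icc 1 N, y (τ j ω) ω) / (N : ℝ))
      atTop (𝓝 (∫ ω, y 1 ω ∂P)) :=
  stmt_15_general P y w hy01 hymeas hwmeas hid hindep hinf τ hτ1 hτs
end
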